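/- arXiv:1112.0410 — 13 statements merged into one kernel-verified Lean document; each statement's English description precedes it below -/
import Mathlib

section
/- Let V be a finite set of cardinality v. For the intersection matrices H_{i,j}^l(v) (rows indexed by i-subsets, columns by j-subsets, entry 1 iff the intersection has size l), the product satisfies H_{i,j}^l(v) · H_{j,k}^s(v) = Σ_{g=0}^{min(i,k)} Σ_{h=0}^{g} C(g,h) C(i−g, l−h) C(k−g, s−h) C(v+g−i−k, j+h−l−s) · H_{i,k}^g(v), where C(a,b) denotes the binomial coefficient (taken to be 0 when b < 0 or b > a). -/
/-- The intersection matrix `H_{i,j}^l(v)`. -/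
def interMat (V : Type*) [DecidableEq V] [Fintype V] (i j : ℕ) (l : ℤ) :
    Matrix {y : Finset V // y.card = i} {z : Finset V // z.card = j} ℂ :=
  Matrix.of fun y z => if ((y.1 ∩ z.1).card : ℤ) = l then 1 else 0

/-- Binomial coefficient `C(a,b)` for integers, with the convention that it is `0`
when `b < 0` or `b > a`. -/
def intChoose (a b : ℤ) : ℤ :=
  if 0 ≤ b ∧ b ≤ a then (a.toNat).choose b.toNat else 0

open Finset in
lemma inter_split {V : Type*} [DecidableEq V] (w t u : Finset V) (h : Disjoint t u) :
    (w ∩ (t ∪ u)).card = (w ∩ t).card + (w ∩ u).card := by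
  rw [Finset.inter_union_distrib_left]
  exact Finset.card_union_of_disjoint (h.mono inter_subset_right inter_subset_right)

open Finset in
lemma cards_split {V : Type*} [DecidableEq V] (y z w : Finset V) :
    (w ∩ y).card = (w ∩ (y ∩ z)).card + (w ∩ (y \ z)).card ∧
    (w ∩ z).card = (w ∩ (y ∩ z)).card + (w ∩ (z \ y)).card ∧
    (w ∩ (y ∪ z)).card + (w \ (y ∪ z)).card = w.card ∧
    (w ∩ (y ∪ z)).card + (w ∩ (y ∩ z)).card = (w ∩ y).card + (w ∩ z).card := by
  refine ⟨?_, ?_, ?_, ?_⟩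
  · rw [← inter_split w _ _ (disjoint_sdiff.mono_left inter_subset_right)]
    congr 1
    rw [Finset.union_comm, Finset.sdiff_union_inter]
  · rw [← inter_split w _ _ (disjoint_sdiff.mono_left inter_subset_left)]
    congr 1
    rw [Finset.union_comm, Finset.inter_comm y z, Finset.sdiff_union_inter]
  · exact Finset.card_inter_add_card_sdiff w (y ∪ z)
  · rw [Finset.inter_union_distrib_left, Finset.inter_inter_distrib_left]
    exact Finset.card_union_add_card_inter _ _

open Finset in
lemma recomb {V : Type*} [DecidableEq V] [Fintype V] {y z A B C D : Finset V}
    (hA : A ⊆ y ∩ z) (hB : B ⊆ y \ z) (hC : C ⊆ z \ y) (hD : D ⊆ (y ∪ z)ᶜ) :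
    (A ∪ (B ∪ (C ∪ D))) ∩ (y ∩ z) = A ∧ (A ∪ (B ∪ (C ∪ D))) ∩ (y \ z) = B ∧
    (A ∪ (B ∪ (C ∪ D))) ∩ (z \ y) = C ∧ (A ∪ (B ∪ (C ∪ D))) \ (y ∪ z) = D ∧
    y ∩ (A ∪ (B ∪ (C ∪ D))) = A ∪ B ∧ (A ∪ (B ∪ (C ∪ D))) ∩ z = A ∪ C := by
  have hA' : ∀ a ∈ A, a ∈ y ∧ a ∈ z := fun a ha => Finset.mem_inter.1 (hA ha)
  have hB' : ∀ a ∈ B, a ∈ y ∧ a ∉ z := fun a ha => Finset.mem_sdiff.1 (hB ha)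
  have hC' : ∀ a ∈ C, a ∈ z ∧ a ∉ y := fun a ha => Finset.mem_sdiff.1 (hC ha)
  have hD' : ∀ a ∈ D, a ∉ y ∧ a ∉ z := by
    intro a ha
    have := Finset.mem_compl.1 (hD ha)
    simp only [Finset.mem_union] at this
    tauto
  refine ⟨?_, ?_, ?_, ?_, ?_, ?_⟩ <;>
    · ext a
      have h1 := hA' a; have h2 := hB' a; have h3 := hC' a; have h4 := hD' a
      simp only [Finset.mem_inter, Finset.mem_union, Finset.mem_sdiff]
      tauto

open Finset in
lemma count_lemma (V : Type*) [DecidableEq V] [Fintype V] (v i j k : ℕ) (l s : ℤ)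
    (hv : Fintype.card V = v) (y z : Finset V) (hy : y.card = i) (hz : z.card = k) :
    ((Finset.univ.filter fun w : Finset V =>
        w.card = j ∧ ((y ∩ w).card : ℤ) = l ∧ ((w ∩ z).card : ℤ) = s).card : ℤ) =
      ∑ h ∈ Finset.range ((y ∩ z).card + 1),
        intChoose ((y ∩ z).card) h * intChoose ((i : ℤ) - (y ∩ z).card) (l - h) *
          intChoose ((k : ℤ) - (y ∩ z).card) (s - h) *
          intChoose ((v : ℤ) + (y ∩ z).card - i - k) ((j : ℤ) + h - l - s) := by
  set g₀ := (y ∩ z).card with hg₀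
  have hYc : (y \ z).card + g₀ = i := by rw [← hy, hg₀]; exact card_sdiff_add_card_inter y z
  have hZc : (z \ y).card + g₀ = k := by
    rw [← hz, hg₀, Finset.inter_comm y z]; exact card_sdiff_add_card_inter z y
  have hUc : (y ∪ z).card + g₀ = i + k := by
    rw [← hy, ← hz, hg₀]; exact card_union_add_card_inter y z
  have hOc : ((y ∪ z)ᶜ).card + (y ∪ z).card = v := by
    rw [← hv]; exact Finset.card_compl_add_card (y ∪ z)
  rw [Finset.card_eq_sum_card_fiberwise
      (f := fun w : Finset V => (w ∩ (y ∩ z)).card) (t := Finset.range (g₀ + 1))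
      (fun w _ => Finset.mem_range.2 (Nat.lt_succ_of_le (card_le_card inter_subset_right)))]
  push_cast
  refine Finset.sum_congr rfl fun h hh => ?_
  have hhg : h ≤ g₀ := Nat.lt_succ_iff.1 (Finset.mem_range.1 hh)
  by_cases H : (0 ≤ l - (h:ℤ) ∧ l - h ≤ (i:ℤ) - g₀) ∧
      (0 ≤ s - (h:ℤ) ∧ s - h ≤ (k:ℤ) - g₀) ∧
      (0 ≤ (j:ℤ) + h - l - s ∧ (j:ℤ) + h - l - s ≤ (v:ℤ) + g₀ - i - k)
  · -- good case
    obtain ⟨⟨H1, H2⟩, ⟨H3, H4⟩, ⟨H5, H6⟩⟩ := H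
    have key : ((Finset.univ.filter fun w : Finset V =>
          w.card = j ∧ ((y ∩ w).card : ℤ) = l ∧ ((w ∩ z).card : ℤ) = s).filter
            fun w => (w ∩ (y ∩ z)).card = h).card =
        ((y ∩ z).powersetCard h ×ˢ ((y \ z).powersetCard (l - h).toNat ×ˢ
          ((z \ y).powersetCard (s - h).toNat ×ˢ
            ((y ∪ z)ᶜ).powersetCard ((j:ℤ) + h - l - s).toNat))).card := by
      apply Finset.card_bij'
        (i := fun w _ => (w ∩ (y ∩ z), (w ∩ (y \ z), (w ∩ (z \ y), w \ (y ∪ z)))))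
        (j := fun q _ => q.1 ∪ (q.2.1 ∪ (q.2.2.1 ∪ q.2.2.2)))
      · -- forward maps into target
        intro w hw
        simp only [Finset.mem_filter, Finset.mem_univ, true_and] at hw
        obtain ⟨⟨hwj, hwl, hws⟩, hwh⟩ := hw
        rw [Finset.inter_comm y w] at hwl
        obtain ⟨f1, f2, f3, f4⟩ := cards_split y z w
        simp only [Finset.mem_product, Finset.mem_powersetCard]
        refine ⟨⟨inter_subset_right, hwh⟩, ⟨inter_subset_right, ?_⟩,
          ⟨inter_subset_right, ?_⟩, ⟨?_, ?_⟩⟩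
        · omega
        · omega
        · intro a ha
          simp only [Finset.mem_sdiff, Finset.mem_union] at ha
          simp only [Finset.mem_compl, Finset.mem_union]
          tauto
        · omega
      · -- inverse maps into source
        rintro ⟨A, B, C, D⟩ hq
        simp only [Finset.mem_product, Finset.mem_powersetCard] at hq
        obtain ⟨⟨hA, hAc⟩, ⟨hB, hBc⟩, ⟨hC, hCc⟩, ⟨hD, hDc⟩⟩ := hq
        obtain ⟨eP, eY, eZ, eO, ey, ez⟩ := recomb hA hB hC hD
        obtain ⟨f1, f2, f3, f4⟩ := cards_split y z (A ∪ (B ∪ (C ∪ D)))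
        have fy : (y ∩ (A ∪ (B ∪ (C ∪ D)))).card = ((A ∪ (B ∪ (C ∪ D))) ∩ y).card := by
          rw [Finset.inter_comm]
        simp only [Finset.mem_filter, Finset.mem_univ, true_and]
        rw [eP, eY, eZ, eO, ey] at *
        refine ⟨⟨?_, ?_, ?_⟩, hAc⟩
        · omega
        · rw [fy] at *; omega
        · omega
      · -- left inverse
        intro w hw
        ext a
        simp only [Finset.mem_union, Finset.mem_inter, Finset.mem_sdiff]
        constructor
        · rintro (h' | h' | h' | h') <;> exact h'.1
        · intro haw
          by_cases hay : a ∈ y <;> by_cases haz : a ∈ z <;> tauto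
      · -- right inverse
        rintro ⟨A, B, C, D⟩ hq
        simp only [Finset.mem_product, Finset.mem_powersetCard] at hq
        obtain ⟨⟨hA, hAc⟩, ⟨hB, hBc⟩, ⟨hC, hCc⟩, ⟨hD, hDc⟩⟩ := hq
        obtain ⟨eP, eY, eZ, eO, ey, ez⟩ := recomb hA hB hC hD
        simp only [Prod.mk.injEq]
        exact ⟨eP, eY, eZ, eO⟩
    rw [key, Finset.card_product, Finset.card_product, Finset.card_product,
      Finset.card_powersetCard, Finset.card_powersetCard, Finset.card_powersetCard,
      Finset.card_powersetCard]
    have e1 : intChoose (g₀ : ℤ) (h : ℤ) = (g₀.choose h : ℤ) := by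
      rw [intChoose, if_pos ⟨Int.natCast_nonneg h, by exact_mod_cast hhg⟩]
      simp
    have e2 : intChoose ((i : ℤ) - g₀) (l - h) = ((y \ z).card.choose (l - h).toNat : ℤ) := by
      rw [intChoose, if_pos ⟨H1, H2⟩]
      have : ((i : ℤ) - g₀).toNat = (y \ z).card := by omega
      rw [this]
    have e3 : intChoose ((k : ℤ) - g₀) (s - h) = ((z \ y).card.choose (s - h).toNat : ℤ) := by
      rw [intChoose, if_pos ⟨H3, H4⟩]
      have : ((k : ℤ) - g₀).toNat = (z \ y).card := by omega
      rw [this]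
    have e4 : intChoose ((v : ℤ) + g₀ - i - k) ((j : ℤ) + h - l - s) =
        (((y ∪ z)ᶜ).card.choose ((j : ℤ) + h - l - s).toNat : ℤ) := by
      rw [intChoose, if_pos ⟨H5, H6⟩]
      have : ((v : ℤ) + g₀ - i - k).toNat = ((y ∪ z)ᶜ).card := by omega
      rw [this]
    rw [e1, e2, e3, e4]
    push_cast
    ring
  · -- bad case
    have hempty : ((Finset.univ.filter fun w : Finset V =>
          w.card = j ∧ ((y ∩ w).card : ℤ) = l ∧ ((w ∩ z).card : ℤ) = s).filter
            fun w => (w ∩ (y ∩ z)).card = h) = ∅ := by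
      rw [Finset.eq_empty_iff_forall_notMem]
      intro w hw
      simp only [Finset.mem_filter, Finset.mem_univ, true_and] at hw
      obtain ⟨⟨hwj, hwl, hws⟩, hwh⟩ := hw
      rw [Finset.inter_comm y w] at hwl
      obtain ⟨f1, f2, f3, f4⟩ := cards_split y z w
      have c1 : (w ∩ (y \ z)).card ≤ (y \ z).card := card_le_card inter_subset_right
      have c2 : (w ∩ (z \ y)).card ≤ (z \ y).card := card_le_card inter_subset_right
      have c3 : (w \ (y ∪ z)).card ≤ ((y ∪ z)ᶜ).card := by
        apply card_le_card
        intro a ha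
        simp only [Finset.mem_sdiff, Finset.mem_union] at ha
        simp only [Finset.mem_compl, Finset.mem_union]
        tauto
      exact H ⟨⟨by omega, by omega⟩, ⟨by omega, by omega⟩, ⟨by omega, by omega⟩⟩
    rw [hempty]
    rcases not_and_or.1 H with H | H'
    rotate_left
    rcases not_and_or.1 H' with H | H
    rotate_left
    · have h0 : intChoose ((v : ℤ) + g₀ - i - k) ((j : ℤ) + h - l - s) = 0 := by
        rw [intChoose, if_neg H]
      rw [h0]; simp
    · have h0 : intChoose ((i : ℤ) - g₀) (l - h) = 0 := by rw [intChoose, if_neg H]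
      rw [h0]; simp
    · have h0 : intChoose ((k : ℤ) - g₀) (s - h) = 0 := by rw [intChoose, if_neg H]
      rw [h0]; simp

theorem stmt1 (V : Type*) [DecidableEq V] [Fintype V] (v i j k : ℕ) (l s : ℤ)
    (hv : Fintype.card V = v) (hi : i ≤ v) (hj : j ≤ v) (hk : k ≤ v) :
    interMat V i j l * interMat V j k s =
      ∑ g ∈ Finset.range (min i k + 1), ∑ h ∈ Finset.range (g + 1),
        ((intChoose g h * intChoose ((i : ℤ) - g) (l - h) * intChoose ((k : ℤ) - g) (s - h) *
            intChoose ((v : ℤ) + g - i - k) ((j : ℤ) + h - l - s) : ℤ) : ℂ) •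
          interMat V i k g := by
  ext y z
  set g₀ := (y.1 ∩ z.1).card with hg₀
  have hg₀le : g₀ ≤ min i k := by
    refine le_min ?_ ?_
    · exact le_trans (Finset.card_le_card Finset.inter_subset_left) (le_of_eq y.2)
    · exact le_trans (Finset.card_le_card Finset.inter_subset_right) (le_of_eq z.2)
  -- RHS
  have hRHS : (∑ g ∈ Finset.range (min i k + 1), ∑ h ∈ Finset.range (g + 1),
        ((intChoose g h * intChoose ((i : ℤ) - g) (l - h) * intChoose ((k : ℤ) - g) (s - h) *
            intChoose ((v : ℤ) + g - i - k) ((j : ℤ) + h - l - s) : ℤ) : ℂ) •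
          interMat V i k g) y z =
      ((∑ h ∈ Finset.range (g₀ + 1),
        intChoose g₀ h * intChoose ((i : ℤ) - g₀) (l - h) * intChoose ((k : ℤ) - g₀) (s - h) *
            intChoose ((v : ℤ) + g₀ - i - k) ((j : ℤ) + h - l - s) : ℤ) : ℂ) := by
    rw [Matrix.sum_apply]
    rw [Finset.sum_eq_single g₀]
    · simp only [Matrix.sum_apply, Matrix.smul_apply, interMat, Matrix.of_apply, ← hg₀]
      push_cast
      simp
    · intro b _ hb
      simp only [Matrix.sum_apply, Matrix.smul_apply, interMat, Matrix.of_apply, ← hg₀]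
      rw [if_neg (by exact_mod_cast (Ne.symm hb))]
      simp
    · intro habs
      exact absurd (Finset.mem_range.2 (Nat.lt_succ_of_le hg₀le)) habs
  rw [hRHS]
  -- LHS
  have hLHS : (interMat V i j l * interMat V j k s) y z =
      ((Finset.univ.filter fun w : Finset V =>
        w.card = j ∧ ((y.1 ∩ w).card : ℤ) = l ∧ ((w ∩ z.1).card : ℤ) = s).card : ℂ) := by
    rw [Matrix.mul_apply]
    simp only [interMat, Matrix.of_apply, ite_mul, one_mul, zero_mul]
    simp only [← ite_and]
    rw [Finset.sum_boole]
    norm_cast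
    apply Finset.card_bij (fun (x : {w : Finset V // w.card = j}) _ => x.1)
    · intro a ha
      simp only [Finset.mem_filter, Finset.mem_univ, true_and] at ha ⊢
      exact ⟨a.2, ha⟩
    · intro a _ b _ hab
      exact Subtype.ext hab
    · intro b hb
      simp only [Finset.mem_filter, Finset.mem_univ, true_and] at hb
      exact ⟨⟨b, hb.1⟩, by simpa using hb.2, rfl⟩
  rw [hLHS]
  have := count_lemma V v i j k l s hv y.1 z.1 y.2 z.2
  exact_mod_cast this
end

section
/- Let V be a finite set of cardinality v. Then H_{i,j}^l(v) · H_{j,k}^0(v) = Σ_{s=max(0, i+j+k−l−v)}^{min(i−l, k)} C(i−s, l) C(v+s−i−k, j−l) · H_{i,k}^s(v), where H_{j,k}^0(v) is the disjointness matrix (entry 1 iff the j-subset and k-subset are disjoint). -/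
lemma intChoose_natCast (a b : ℕ) : intChoose (a : ℤ) (b : ℤ) = a.choose b := by
  unfold intChoose
  split_ifs with h
  · simp
  · have hba : a < b := by
      rcases not_and_or.mp h with h1 | h2
      · exact absurd (Int.natCast_nonneg b) h1
      · exact_mod_cast lt_of_not_ge h2
    simp [Nat.choose_eq_zero_of_lt hba]

lemma count_subsets {V : Type*} [DecidableEq V] (A B : Finset V) (hBA : B ⊆ A)
    (j l : ℕ) (hl : l ≤ j) :
    ((A.powersetCard j).filter fun w => (w ∩ B).card = l).card
      = B.card.choose l * ((A \ B).card).choose (j - l) := by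
  classical
  rw [← Finset.card_powersetCard, ← Finset.card_powersetCard, ← Finset.card_product]
  apply Finset.card_nbij' (fun w => (w ∩ B, w \ B)) (fun p => p.1 ∪ p.2)
  · intro w hw
    simp only [Finset.mem_coe, Finset.mem_filter, Finset.mem_powersetCard] at hw
    obtain ⟨⟨hwA, hwcard⟩, hwB⟩ := hw
    simp only [Finset.mem_coe, Finset.mem_product, Finset.mem_powersetCard]
    refine ⟨⟨Finset.inter_subset_right, hwB⟩, ?_, ?_⟩
    · exact Finset.sdiff_subset_sdiff hwA (le_refl B)
    · have h1 := Finset.card_inter_add_card_sdiff w B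
      omega
  · intro p hp
    simp only [Finset.mem_coe, Finset.mem_product, Finset.mem_powersetCard] at hp
    obtain ⟨⟨h1A, h1c⟩, h2A, h2c⟩ := hp
    have hdisj : Disjoint p.1 p.2 :=
      Finset.disjoint_left.mpr fun x hx1 hx2 => (Finset.mem_sdiff.mp (h2A hx2)).2 (h1A hx1)
    simp only [Finset.mem_coe, Finset.mem_filter, Finset.mem_powersetCard]
    have hsub : p.1 ∪ p.2 ⊆ A := Finset.union_subset (h1A.trans hBA) (h2A.trans Finset.sdiff_subset)
    refine ⟨⟨hsub, ?_⟩, ?_⟩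
    · rw [Finset.card_union_of_disjoint hdisj, h1c, h2c]; omega
    · have : p.1 ∪ p.2 ∩ B = p.1 ∪ ∅ := by
        congr 1
        exact Finset.eq_empty_of_forall_notMem fun x hx =>
          (Finset.mem_sdiff.mp (h2A (Finset.mem_inter.mp hx).1)).2 (Finset.mem_inter.mp hx).2
      rw [Finset.union_inter_distrib_right, Finset.inter_eq_left.mpr h1A]
      rw [this, Finset.union_empty, h1c]
  · intro w hw
    simp only [Finset.mem_coe, Finset.mem_filter, Finset.mem_powersetCard] at hw
    exact (Finset.union_comm _ _).trans (Finset.sdiff_union_inter w B)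
  · intro p hp
    simp only [Finset.mem_coe, Finset.mem_product, Finset.mem_powersetCard] at hp
    obtain ⟨⟨h1A, h1c⟩, h2A, h2c⟩ := hp
    have h2B : Disjoint p.2 B :=
      Finset.disjoint_left.mpr fun x hx2 hxB => (Finset.mem_sdiff.mp (h2A hx2)).2 hxB
    have h1 : (p.1 ∪ p.2) ∩ B = p.1 := by
      rw [Finset.union_inter_distrib_right, Finset.inter_eq_left.mpr h1A,
        Finset.disjoint_iff_inter_eq_empty.mp h2B, Finset.union_empty]
    have h2 : (p.1 ∪ p.2) \ B = p.2 := by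
      rw [Finset.union_sdiff_distrib, Finset.sdiff_eq_empty_iff_subset.mpr h1A,
        Finset.sdiff_eq_self_of_disjoint h2B, Finset.empty_union]
    exact Prod.ext h1 h2

theorem stmt2 (V : Type*) [DecidableEq V] [Fintype V] (v i j k : ℕ) (l : ℤ)
    (hv : Fintype.card V = v) (hi : i ≤ v) (hj : j ≤ v) (hk : k ≤ v) :
    interMat V i j l * interMat V j k 0 =
      ∑ s ∈ Finset.Icc (max 0 ((i : ℤ) + j + k - l - v)) (min ((i : ℤ) - l) k),
        ((intChoose ((i : ℤ) - s) l * intChoose ((v : ℤ) + s - i - k) ((j : ℤ) - l) : ℤ) : ℂ) •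
          interMat V i k s := by
  classical
  subst hv
  ext y z
  set v := Fintype.card V with hv
  obtain ⟨s0, hs0⟩ : ∃ s0, (y.1 ∩ z.1).card = s0 := ⟨_, rfl⟩
  have hs0k : s0 ≤ k := by
    have h : (y.1 ∩ z.1).card ≤ z.1.card := Finset.card_le_card Finset.inter_subset_right
    rw [z.2, hs0] at h; exact h
  have hs0i : s0 ≤ i := by
    have h : (y.1 ∩ z.1).card ≤ y.1.card := Finset.card_le_card Finset.inter_subset_left
    rw [y.2, hs0] at h; exact h
  have hyz : s0 + (y.1 \ z.1).card = i := by
    have := Finset.card_inter_add_card_sdiff y.1 z.1; rw [y.2, hs0] at this; exact this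
  have hcompl : z.1ᶜ.card = v - k := by rw [Finset.card_compl, z.2]
  have hBsub : y.1 \ z.1 ⊆ z.1ᶜ := by
    intro x hx
    simp only [Finset.mem_sdiff] at hx
    simpa using hx.2
  have hisv : i - s0 ≤ v - k := by
    have := Finset.card_le_card hBsub
    omega
  -- key counting identity
  have key : (interMat V i j l * interMat V j k 0) y z =
      ((intChoose ((i : ℤ) - s0) l * intChoose ((v : ℤ) + s0 - i - k) ((j : ℤ) - l) : ℤ) : ℂ) := by
    rw [Matrix.mul_apply]
    simp only [interMat, Matrix.of_apply, boole_mul, ← ite_and]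
    rw [Finset.sum_boole]
    have hcard : (Finset.univ.filter fun w : {w : Finset V // w.card = j} =>
        ((y.1 ∩ w.1).card : ℤ) = l ∧ ((w.1 ∩ z.1).card : ℤ) = 0).card =
        ((Finset.univ.powersetCard j).filter fun w =>
          ((y.1 ∩ w).card : ℤ) = l ∧ ((w ∩ z.1).card : ℤ) = 0).card := by
      apply Finset.card_nbij (fun w => w.1)
      · intro w hw
        simp only [Finset.mem_coe, Finset.mem_filter, Finset.mem_powersetCard] at *
        exact ⟨⟨Finset.subset_univ _, w.2⟩, hw.2⟩
      · intro a _ b _ hab; exact Subtype.ext hab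
      · intro w hw
        simp only [Finset.coe_filter, Finset.mem_powersetCard, Set.mem_setOf_eq,
          Finset.mem_univ, true_and, Set.mem_image] at *
        exact ⟨⟨w, hw.1.2⟩, hw.2, rfl⟩
    rw [hcard]
    by_cases hl0 : 0 ≤ l
    · set ln := l.toNat with hln
      have hlln : l = (ln : ℤ) := (Int.toNat_of_nonneg hl0).symm
      by_cases hlj : ln ≤ j
      · -- main case
        have hfilter : ((Finset.univ.powersetCard j).filter fun w =>
            ((y.1 ∩ w).card : ℤ) = l ∧ ((w ∩ z.1).card : ℤ) = 0) =
            ((z.1ᶜ.powersetCard j).filter fun w => (w ∩ (y.1 \ z.1)).card = ln) := by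
          ext w
          simp only [Finset.mem_filter, Finset.mem_powersetCard, Finset.subset_univ, true_and,
            hlln, Nat.cast_inj, Nat.cast_eq_zero, Finset.card_eq_zero]
          constructor
          · rintro ⟨hcard, hyw, hwz⟩
            have hdisj : Disjoint w z.1 := Finset.disjoint_iff_inter_eq_empty.mpr hwz
            refine ⟨⟨?_, hcard⟩, ?_⟩
            · intro x hx
              simpa using Finset.disjoint_left.mp hdisj hx
            · rw [← Finset.inter_sdiff_assoc, Finset.sdiff_eq_self_of_disjoint
                (hdisj.mono_left Finset.inter_subset_left), Finset.inter_comm, hyw]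
          · rintro ⟨⟨hwc, hcard⟩, hl⟩
            have hdisj : Disjoint w z.1 := by
              rw [Finset.disjoint_left]; intro x hx hxz
              exact (Finset.mem_compl.mp (hwc hx)) hxz
            refine ⟨hcard, ?_, Finset.disjoint_iff_inter_eq_empty.mp hdisj⟩
            rw [← hl, ← Finset.inter_sdiff_assoc, Finset.sdiff_eq_self_of_disjoint
              (hdisj.mono_left Finset.inter_subset_left), Finset.inter_comm]
        rw [hfilter, count_subsets z.1ᶜ (y.1 \ z.1) hBsub j ln hlj,
          Finset.card_sdiff_of_subset hBsub, hcompl]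
        have h1 : (y.1 \ z.1).card = i - s0 := by omega
        rw [h1]
        have hc1 : ((i : ℤ) - s0) = ((i - s0 : ℕ) : ℤ) := by omega
        have hc2 : ((v : ℤ) + s0 - i - k) = ((v - k - (i - s0) : ℕ) : ℤ) := by omega
        have hc3 : ((j : ℤ) - (ln : ℤ)) = ((j - ln : ℕ) : ℤ) := by omega
        rw [hlln, hc1, hc2, hc3, intChoose_natCast, intChoose_natCast]
        push_cast
        ring
      · -- ln > j : count is zero, and coefficient is zero
        have hempty : ((Finset.univ.powersetCard j).filter fun w =>
            ((y.1 ∩ w).card : ℤ) = l ∧ ((w ∩ z.1).card : ℤ) = 0) = ∅ := by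
          apply Finset.filter_false_of_mem
          intro w hw
          simp only [Finset.mem_powersetCard] at hw
          intro hc
          have : (y.1 ∩ w).card ≤ w.card := Finset.card_le_card Finset.inter_subset_right
          omega
        rw [hempty]
        have : intChoose ((v : ℤ) + s0 - i - k) ((j : ℤ) - l) = 0 := by
          unfold intChoose
          rw [if_neg]; omega
        simp [this]
    · -- l < 0 : both sides zero
      have hempty : ((Finset.univ.powersetCard j).filter fun w =>
          ((y.1 ∩ w).card : ℤ) = l ∧ ((w ∩ z.1).card : ℤ) = 0) = ∅ := by
        apply Finset.filter_false_of_mem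
        intro w _ hc
        omega
      rw [hempty]
      have : intChoose ((i : ℤ) - s0) l = 0 := by
        unfold intChoose; rw [if_neg]; omega
      simp [this]
  -- evaluate RHS
  rw [key, Matrix.sum_apply]
  simp only [Matrix.smul_apply, interMat, Matrix.of_apply, smul_ite, smul_eq_mul, mul_one,
    mul_zero, smul_zero, mul_ite, hs0]
  rw [Finset.sum_ite_eq (Finset.Icc _ _) ((s0 : ℤ)) (fun s =>
    ((intChoose ((i : ℤ) - s) l * intChoose ((v : ℤ) + s - i - k) ((j : ℤ) - l) : ℤ) : ℂ))]
  split_ifs with h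
  · rfl
  · rw [Finset.mem_Icc] at h
    push_neg at h
    by_cases h1 : max 0 ((i : ℤ) + j + k - l - v) ≤ (s0 : ℤ)
    · have h2 := h h1
      have : (i : ℤ) - l < s0 := by omega
      have : intChoose ((i : ℤ) - s0) l = 0 := by
        unfold intChoose; rw [if_neg]; omega
      simp [this]
    · have : (s0 : ℤ) < (i : ℤ) + j + k - l - v := by omega
      have : intChoose ((v : ℤ) + s0 - i - k) ((j : ℤ) - l) = 0 := by
        unfold intChoose; rw [if_neg]; omega
      simp [this]
end

section
/- Let Ω be a set of size 2m+1 and let O_{m+1} be the Odd graph whose vertices are the m-subsets of Ω, two vertices adjacent iff disjoint. Fix a vertex x. For m-subsets y, z of Ω, one has distance d(x,y) = 2i if and only if |x ∩ y| = m − i, and d(x,y) = 2i+1 if and only if |x ∩ y| = i (for 0 ≤ i ≤ ⌊m/2⌋ resp. 0 ≤ i ≤ ⌈m/2⌉ − 1). -/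
/-- The Odd graph `O_{m+1}`: vertices are the `m`-subsets of `Ω` (with `|Ω| = 2m+1`),
two vertices adjacent iff they are disjoint (for `m ≥ 1` disjoint subsets are distinct). -/
def oddGraph (Ω : Type*) [DecidableEq Ω] (m : ℕ) :
    SimpleGraph {y : Finset Ω // y.card = m} where
  Adj y z := y ≠ z ∧ Disjoint y.1 z.1
  symm := ⟨fun _ _ h => ⟨h.1.symm, h.2.symm⟩⟩
  loopless := ⟨fun _ h => h.1 rfl⟩

open Finset

/-- The distance in the Odd graph as a function of `|x ∩ y|`. -/
def Dfun (m j : ℕ) : ℕ := if m ≤ 2 * j then 2 * (m - j) else 2 * j + 1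

section Aux

variable {Ω : Type*} [DecidableEq Ω] [Fintype Ω] {m : ℕ}

lemma card_inter_le_left' (x y : {s : Finset Ω // s.card = m}) :
    (x.1 ∩ y.1).card ≤ m := by
  calc (x.1 ∩ y.1).card ≤ x.1.card := card_le_card inter_subset_left
  _ = m := x.2

lemma aux_arith {m a b : ℕ} (ha : a ≤ m) (hb : b ≤ m) (h1 : a + b ≤ m)
    (h2 : m ≤ a + b + 1) : Dfun m a ≤ Dfun m b + 1 := by
  unfold Dfun; split_ifs <;> omega

lemma card_inter_compl (x y : {s : Finset Ω // s.card = m}) :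
    (x.1 ∩ y.1ᶜ).card = m - (x.1 ∩ y.1).card := by
  have h : x.1 ∩ y.1ᶜ = x.1 \ y.1 := by
    ext a; simp [Finset.mem_sdiff, Finset.mem_compl]
  rw [h]
  have := Finset.card_inter_add_card_sdiff x.1 y.1
  omega

lemma adj_of_disjoint (hm : 1 ≤ m) (y z : {s : Finset Ω // s.card = m})
    (hd : Disjoint y.1 z.1) : (oddGraph Ω m).Adj y z := by
  refine ⟨fun h => ?_, hd⟩
  subst h
  rw [disjoint_self] at hd
  have := y.2
  rw [hd] at this
  simp at this
  omega

/-- Construct a neighbor `z` of `y` with `|x ∩ z| = m - |x ∩ y|`. -/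
lemma step_up (hm : 1 ≤ m) (hΩ : Fintype.card Ω = 2 * m + 1)
    (x y : {s : Finset Ω // s.card = m}) :
    ∃ z : {s : Finset Ω // s.card = m}, (oddGraph Ω m).Adj y z ∧
      (x.1 ∩ z.1).card = m - (x.1 ∩ y.1).card := by
  set c : Finset Ω := y.1ᶜ with hc
  have hcc : c.card = m + 1 := by
    rw [hc, Finset.card_compl, y.2, hΩ]; omega
  have hxc : (x.1 ∩ c).card = m - (x.1 ∩ y.1).card := card_inter_compl x y
  have hne : (c \ x.1).Nonempty := by
    rw [← Finset.card_pos]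
    have h1 : (c ∩ x.1).card + (c \ x.1).card = c.card :=
      Finset.card_inter_add_card_sdiff c x.1
    have h2 : (c ∩ x.1).card = (x.1 ∩ c).card := by rw [Finset.inter_comm]
    have h3 : (x.1 ∩ y.1).card ≤ m := card_inter_le_left' x y
    omega
  obtain ⟨a, ha⟩ := hne
  rw [Finset.mem_sdiff] at ha
  have hac : a ∈ c := ha.1
  have hax : a ∉ x.1 := ha.2
  refine ⟨⟨c.erase a, ?_⟩, ?_, ?_⟩
  · rw [Finset.card_erase_of_mem hac, hcc]; omega
  · apply adj_of_disjoint hm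
    simp only
    exact Finset.disjoint_left.mpr fun b hb hb' => by
      have := Finset.mem_of_mem_erase hb'
      rw [hc, Finset.mem_compl] at this
      exact this hb
  · simp only
    have : x.1 ∩ c.erase a = x.1 ∩ c := by
      ext b
      simp only [Finset.mem_inter, Finset.mem_erase]
      constructor
      · rintro ⟨h1, _, h2⟩; exact ⟨h1, h2⟩
      · rintro ⟨h1, h2⟩; exact ⟨h1, fun h => hax (h ▸ h1), h2⟩
    rw [this, hxc]

/-- Construct a neighbor `z` of `y` with `|x ∩ z| = m - |x ∩ y| - 1`, when `|x ∩ y| < m`. -/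
lemma step_down (hm : 1 ≤ m) (hΩ : Fintype.card Ω = 2 * m + 1)
    (x y : {s : Finset Ω // s.card = m}) (hj : (x.1 ∩ y.1).card < m) :
    ∃ z : {s : Finset Ω // s.card = m}, (oddGraph Ω m).Adj y z ∧
      (x.1 ∩ z.1).card = m - (x.1 ∩ y.1).card - 1 := by
  set c : Finset Ω := y.1ᶜ with hc
  have hcc : c.card = m + 1 := by
    rw [hc, Finset.card_compl, y.2, hΩ]; omega
  have hxc : (x.1 ∩ c).card = m - (x.1 ∩ y.1).card := card_inter_compl x y
  have hne : (x.1 ∩ c).Nonempty := by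
    rw [← Finset.card_pos, hxc]; omega
  obtain ⟨a, ha⟩ := hne
  rw [Finset.mem_inter] at ha
  have hac : a ∈ c := ha.2
  have hax : a ∈ x.1 := ha.1
  refine ⟨⟨c.erase a, ?_⟩, ?_, ?_⟩
  · rw [Finset.card_erase_of_mem hac, hcc]; omega
  · apply adj_of_disjoint hm
    simp only
    exact Finset.disjoint_left.mpr fun b hb hb' => by
      have := Finset.mem_of_mem_erase hb'
      rw [hc, Finset.mem_compl] at this
      exact this hb
  · simp only
    have : x.1 ∩ c.erase a = (x.1 ∩ c).erase a := by
      ext b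
      simp only [Finset.mem_inter, Finset.mem_erase]
      tauto
    rw [this, Finset.card_erase_of_mem (Finset.mem_inter.mpr ⟨hax, hac⟩), hxc]

lemma eq_of_inter_card (x y : {s : Finset Ω // s.card = m})
    (h : (x.1 ∩ y.1).card = m) : x = y := by
  have h1 : x.1 ∩ y.1 = x.1 := by
    apply Finset.eq_of_subset_of_card_le inter_subset_left
    rw [h, x.2]
  have h2 : x.1 ⊆ y.1 := by rw [← h1]; exact inter_subset_right
  exact Subtype.ext (Finset.eq_of_subset_of_card_le h2 (by rw [x.2, y.2]))

lemma exists_walk (hm : 1 ≤ m) (hΩ : Fintype.card Ω = 2 * m + 1)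
    (x y : {s : Finset Ω // s.card = m}) :
    ∃ p : (oddGraph Ω m).Walk x y, p.length = Dfun m (x.1 ∩ y.1).card := by
  generalize hn : Dfun m (x.1 ∩ y.1).card = n
  induction n using Nat.strong_induction_on generalizing y with
  | _ n ih =>
    have hjle : (x.1 ∩ y.1).card ≤ m := card_inter_le_left' x y
    by_cases hj : (x.1 ∩ y.1).card = m
    · have hxy : x = y := eq_of_inter_card x y hj
      subst hxy
      refine ⟨SimpleGraph.Walk.nil, ?_⟩
      simp only [SimpleGraph.Walk.length_nil]
      rw [← hn, hj]
      unfold Dfun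
      split_ifs <;> omega
    · have hjlt : (x.1 ∩ y.1).card < m := lt_of_le_of_ne hjle hj
      set j := (x.1 ∩ y.1).card with hjdef
      by_cases hpar : m ≤ 2 * j
      · -- even branch: go to intersection m - j - 1
        obtain ⟨z, hadj, hz⟩ := step_down hm hΩ x y hjlt
        have hD : Dfun m (x.1 ∩ z.1).card = n - 1 ∧ 1 ≤ n := by
          rw [hz, ← hn]; unfold Dfun; split_ifs <;> omega
        obtain ⟨q, hq⟩ := ih (n - 1) (by omega) z (hD.1)
        refine ⟨q.concat hadj.symm, ?_⟩
        rw [SimpleGraph.Walk.length_concat, hq]; omega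
      · obtain ⟨z, hadj, hz⟩ := step_up hm hΩ x y
        have hD : Dfun m (x.1 ∩ z.1).card = n - 1 ∧ 1 ≤ n := by
          rw [hz, ← hn]; unfold Dfun; split_ifs <;> omega
        obtain ⟨q, hq⟩ := ih (n - 1) (by omega) z (hD.1)
        refine ⟨q.concat hadj.symm, ?_⟩
        rw [SimpleGraph.Walk.length_concat, hq]; omega

lemma walk_lower (hΩ : Fintype.card Ω = 2 * m + 1)
    {u v : {s : Finset Ω // s.card = m}} (p : (oddGraph Ω m).Walk u v) :
    Dfun m (u.1 ∩ v.1).card ≤ p.length := by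
  induction p with
  | nil =>
    rename_i u'
    simp only [SimpleGraph.Walk.length_nil]
    have : (u'.1 ∩ u'.1).card = m := by rw [Finset.inter_self, u'.2]
    rw [this]
    unfold Dfun
    split_ifs <;> omega
  | @cons u w v h q ih =>
    rw [SimpleGraph.Walk.length_cons]
    have hd : Disjoint u.1 w.1 := h.2
    set a := (v.1 ∩ u.1).card with hadef
    set b := (v.1 ∩ w.1).card with hbdef
    have hsum1 : a + b ≤ m := by
      have hdisj : Disjoint (v.1 ∩ u.1) (v.1 ∩ w.1) :=
        (hd.mono inter_subset_right inter_subset_right)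
      have hsub : (v.1 ∩ u.1) ∪ (v.1 ∩ w.1) ⊆ v.1 :=
        Finset.union_subset inter_subset_left inter_subset_left
      calc a + b = ((v.1 ∩ u.1) ∪ (v.1 ∩ w.1)).card :=
            (Finset.card_union_of_disjoint hdisj).symm
        _ ≤ v.1.card := card_le_card hsub
        _ = m := v.2
    have hsum2 : m ≤ a + b + 1 := by
      have huw : (u.1 ∪ w.1).card = 2 * m := by
        rw [Finset.card_union_of_disjoint hd, u.2, w.2]; omega
      have hsplit : (v.1 ∩ (u.1 ∪ w.1)).card + (v.1 \ (u.1 ∪ w.1)).card = m := by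
        rw [Finset.card_inter_add_card_sdiff, v.2]
      have hinter : v.1 ∩ (u.1 ∪ w.1) = (v.1 ∩ u.1) ∪ (v.1 ∩ w.1) :=
        Finset.inter_union_distrib_left _ _ _
      have hcard : (v.1 ∩ (u.1 ∪ w.1)).card = a + b := by
        rw [hinter, Finset.card_union_of_disjoint
          (hd.mono inter_subset_right inter_subset_right)]
      have hsdiff : (v.1 \ (u.1 ∪ w.1)).card ≤ 1 := by
        have h1 : v.1 \ (u.1 ∪ w.1) ⊆ (u.1 ∪ w.1)ᶜ := by
          intro b hb
          rw [Finset.mem_sdiff] at hb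
          rw [Finset.mem_compl]
          exact hb.2
        have h2 : ((u.1 ∪ w.1)ᶜ).card = 1 := by
          rw [Finset.card_compl, huw, hΩ]; omega
        calc (v.1 \ (u.1 ∪ w.1)).card ≤ ((u.1 ∪ w.1)ᶜ).card := card_le_card h1
          _ = 1 := h2
      omega
    have ha : a ≤ m := by
      calc a ≤ v.1.card := card_le_card inter_subset_left
        _ = m := v.2
    have hb : b ≤ m := by
      calc b ≤ v.1.card := card_le_card inter_subset_left
        _ = m := v.2
    have key : Dfun m a ≤ Dfun m b + 1 := aux_arith ha hb hsum1 hsum2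
    have h1 : (u.1 ∩ v.1).card = a := by rw [hadef, Finset.inter_comm]
    have h2 : (w.1 ∩ v.1).card = b := by rw [hbdef, Finset.inter_comm]
    rw [h1]
    rw [h2] at ih
    omega

lemma dist_eq_Dfun (hm : 1 ≤ m) (hΩ : Fintype.card Ω = 2 * m + 1)
    (x y : {s : Finset Ω // s.card = m}) :
    (oddGraph Ω m).dist x y = Dfun m (x.1 ∩ y.1).card := by
  obtain ⟨p, hp⟩ := exists_walk hm hΩ x y
  refine le_antisymm ?_ ?_
  · calc (oddGraph Ω m).dist x y ≤ p.length := SimpleGraph.dist_le p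
      _ = _ := hp
  · obtain ⟨q, hq⟩ := SimpleGraph.Reachable.exists_walk_length_eq_dist ⟨p⟩
    calc Dfun m (x.1 ∩ y.1).card ≤ q.length := walk_lower hΩ q
      _ = _ := hq

end Aux

theorem stmt3 (Ω : Type*) [DecidableEq Ω] [Fintype Ω] (m : ℕ) (hm : 1 ≤ m)
    (hΩ : Fintype.card Ω = 2 * m + 1) (x y : {s : Finset Ω // s.card = m}) :
    (∀ i : ℕ, i ≤ m / 2 →
      ((oddGraph Ω m).dist x y = 2 * i ↔ (x.1 ∩ y.1).card = m - i)) ∧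
    (∀ i : ℕ, i + 1 ≤ (m + 1) / 2 →
      ((oddGraph Ω m).dist x y = 2 * i + 1 ↔ (x.1 ∩ y.1).card = i)) := by
  have hjle : (x.1 ∩ y.1).card ≤ m := card_inter_le_left' x y
  rw [dist_eq_Dfun hm hΩ x y]
  constructor
  · intro i hi
    unfold Dfun
    split_ifs <;> omega
  · intro i hi
    unfold Dfun
    split_ifs <;> omega
end

section
/- The Odd graph O_{m+1} (vertices: m-subsets of a (2m+1)-set, adjacent iff disjoint) has diameter m. -/
namespace OddGraphAux

set_option linter.unusedSectionVars false
variable {Ω : Type*} [DecidableEq Ω] [Fintype Ω] {m : ℕ}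

lemma inter_card_le {A B : Finset Ω} (hA : A.card = m) : (A ∩ B).card ≤ m :=
  le_trans (Finset.card_le_card Finset.inter_subset_left) (le_of_eq hA)

/-- Construct a neighbor (a set disjoint from `A`) with prescribed intersection size with `B`. -/
lemma exists_neighbor (hΩ : Fintype.card Ω = 2 * m + 1)
    {A B : Finset Ω} (hA : A.card = m) (hB : B.card = m) {t : ℕ}
    (ht1 : t ≤ m - (A ∩ B).card) (ht2 : m - t ≤ (A ∩ B).card + 1) :
    ∃ C : Finset Ω, C.card = m ∧ Disjoint C A ∧ (C ∩ B).card = t := by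
  have hsle : (A ∩ B).card ≤ m := inter_card_le hA
  -- pick t elements of B \ A
  have hBA : (B \ A).card = m - (A ∩ B).card := by
    have h1 := Finset.card_sdiff_add_card_inter B A
    have h2 : (B ∩ A).card = (A ∩ B).card := by rw [Finset.inter_comm]
    omega
  obtain ⟨T, hTsub, hTcard⟩ := Finset.exists_subset_card_eq (hBA ▸ ht1)
  -- pick m - t elements outside A ∪ B
  have hABu : (A ∪ B).card = 2 * m - (A ∩ B).card := by
    have := Finset.card_inter_add_card_union A B
    omega
  have hcompl : ((A ∪ B)ᶜ).card = (A ∩ B).card + 1 := by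
    rw [Finset.card_compl, hABu, hΩ]
    omega
  obtain ⟨U, hUsub, hUcard⟩ := Finset.exists_subset_card_eq (n := m - t)
    (by omega : m - t ≤ ((A ∪ B)ᶜ).card)
  have hUA : Disjoint U A := by
    refine Finset.disjoint_left.2 fun x hx hxA => ?_
    exact (Finset.mem_compl.1 (hUsub hx)) (Finset.mem_union_left _ hxA)
  have hUB : Disjoint U B := by
    refine Finset.disjoint_left.2 fun x hx hxB => ?_
    exact (Finset.mem_compl.1 (hUsub hx)) (Finset.mem_union_right _ hxB)
  have hTU : Disjoint T U := by
    refine Finset.disjoint_left.2 fun x hx hxU => ?_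
    exact (Finset.disjoint_left.1 hUB hxU) ((Finset.mem_sdiff.1 (hTsub hx)).1)
  refine ⟨T ∪ U, ?_, ?_, ?_⟩
  · rw [Finset.card_union_of_disjoint hTU, hTcard, hUcard]; omega
  · refine Finset.disjoint_union_left.2 ⟨?_, hUA⟩
    exact Finset.disjoint_left.2 fun x hx => (Finset.mem_sdiff.1 (hTsub hx)).2
  · have : (T ∪ U) ∩ B = T := by
      rw [Finset.union_inter_distrib_right]
      rw [Finset.inter_eq_left.2 fun x hx => (Finset.mem_sdiff.1 (hTsub hx)).1]
      rw [(Finset.disjoint_iff_inter_eq_empty.1 hUB)]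
      simp
    rw [this, hTcard]

lemma subtype_adj (hm : 1 ≤ m) {A C : {y : Finset Ω // y.card = m}}
    (h : Disjoint A.1 C.1) : (oddGraph Ω m).Adj A C := by
  refine ⟨fun e => ?_, h⟩
  subst e
  have h0 : A.1 = ∅ := by simpa using disjoint_self.mp h
  have h1 := A.2
  rw [h0] at h1
  simp at h1
  omega

/-- Upper bound: there is a walk of length at most `min (2*(m-s)) (2*s+1)`. -/
lemma walk_ub (hm : 1 ≤ m) (hΩ : Fintype.card Ω = 2 * m + 1) :
    ∀ n : ℕ, ∀ A B : {y : Finset Ω // y.card = m},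
      min (2 * (m - (A.1 ∩ B.1).card)) (2 * (A.1 ∩ B.1).card + 1) ≤ n →
      ∃ p : (oddGraph Ω m).Walk A B, p.length ≤ n := by
  intro n
  induction n using Nat.strong_induction_on with
  | _ n IH =>
    intro A B hmin
    have hsle : (A.1 ∩ B.1).card ≤ m := inter_card_le A.2
    by_cases hsm : (A.1 ∩ B.1).card = m
    · -- A = B
      have h1 : A.1 ∩ B.1 = A.1 :=
        Finset.eq_of_subset_of_card_le Finset.inter_subset_left
          (by have := A.2; omega)
      have h2 : A.1 ⊆ B.1 := h1 ▸ Finset.inter_subset_right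
      have hAB : A = B := Subtype.ext
        (Finset.eq_of_subset_of_card_le h2 (by rw [A.2, B.2]))
      subst hAB
      exact ⟨SimpleGraph.Walk.nil, Nat.zero_le _⟩
    · have hslt : (A.1 ∩ B.1).card < m := lt_of_le_of_ne hsle hsm
      rw [min_le_iff] at hmin
      by_cases hcase : 2 * (A.1 ∩ B.1).card + 1 ≤ 2 * (m - (A.1 ∩ B.1).card)
      · -- odd branch: go to C with |C ∩ B| = m - s
        obtain ⟨C, hC, hCA, hCB⟩ := exists_neighbor hΩ A.2 B.2
          (t := m - (A.1 ∩ B.1).card) (le_refl _) (by omega)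
        have hn1 : 1 ≤ n := by omega
        obtain ⟨q, hq⟩ := IH (n - 1) (by omega) ⟨C, hC⟩ B (by
          simp only [hCB]
          rw [min_le_iff]
          omega)
        refine ⟨SimpleGraph.Walk.cons (subtype_adj hm hCA.symm) q, ?_⟩
        simp only [SimpleGraph.Walk.length_cons]
        omega
      · -- even branch: go to C with |C ∩ B| = m - s - 1
        obtain ⟨C, hC, hCA, hCB⟩ := exists_neighbor hΩ A.2 B.2
          (t := m - (A.1 ∩ B.1).card - 1) (by omega) (by omega)
        have hn1 : 1 ≤ n := by omega
        obtain ⟨q, hq⟩ := IH (n - 1) (by omega) ⟨C, hC⟩ B (by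
          simp only [hCB]
          rw [min_le_iff]
          omega)
        refine ⟨SimpleGraph.Walk.cons (subtype_adj hm hCA.symm) q, ?_⟩
        simp only [SimpleGraph.Walk.length_cons]
        omega

/-- For adjacent vertices, intersection sizes with a fixed `B` nearly complement. -/
lemma adj_inter_card (hΩ : Fintype.card Ω = 2 * m + 1)
    {X Y : {y : Finset Ω // y.card = m}} (h : Disjoint X.1 Y.1) (B : Finset Ω)
    (hB : B.card = m) :
    m - 1 ≤ (X.1 ∩ B).card + (Y.1 ∩ B).card ∧
      (X.1 ∩ B).card + (Y.1 ∩ B).card ≤ m := by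
  have hdisj : Disjoint (X.1 ∩ B) (Y.1 ∩ B) :=
    (h.mono Finset.inter_subset_left Finset.inter_subset_left)
  have hXB : (X.1 ∩ B) ∪ (Y.1 ∩ B) = (X.1 ∪ Y.1) ∩ B := by
    rw [Finset.union_inter_distrib_right]
  have hsum : (X.1 ∩ B).card + (Y.1 ∩ B).card = ((X.1 ∪ Y.1) ∩ B).card := by
    rw [← hXB, Finset.card_union_of_disjoint hdisj]
  constructor
  · have h1 := Finset.card_inter_add_card_union (X.1 ∪ Y.1) B
    have h2 : ((X.1 ∪ Y.1) ∪ B).card ≤ 2 * m + 1 := hΩ ▸ Finset.card_le_univ _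
    have h3 : (X.1 ∪ Y.1).card = 2 * m := by
      rw [Finset.card_union_of_disjoint h, X.2, Y.2]; omega
    omega
  · have hsub : (X.1 ∪ Y.1) ∩ B ⊆ B := Finset.inter_subset_right
    have h4 := Finset.card_le_card hsub
    omega

/-- Lower bound: every walk is at least as long as `min (2*(m-s)) (2*s+1)`. -/
lemma walk_lb (hΩ : Fintype.card Ω = 2 * m + 1) :
    ∀ (X Y : {y : Finset Ω // y.card = m}) (p : (oddGraph Ω m).Walk X Y),
      min (2 * (m - (X.1 ∩ Y.1).card)) (2 * (X.1 ∩ Y.1).card + 1) ≤ p.length := by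
  intro X Y p
  induction p with
  | nil =>
    rename_i u
    have hu := u.2
    simp [Finset.inter_self, hu]
  | cons h q IHq =>
    rename_i u v w
    obtain ⟨hml, hmu⟩ := adj_inter_card hΩ h.2 w.1 w.2
    have hsle : (u.1 ∩ w.1).card ≤ m := inter_card_le u.2
    have hsle' : (v.1 ∩ w.1).card ≤ m := inter_card_le v.2
    simp only [SimpleGraph.Walk.length_cons]
    rcases min_le_iff.1 IHq with h1 | h1 <;> rw [min_le_iff] <;> omega

end OddGraphAux

theorem stmt4 (Ω : Type*) [DecidableEq Ω] [Fintype Ω] (m : ℕ) (hm : 1 ≤ m)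
    (hΩ : Fintype.card Ω = 2 * m + 1) :
    (oddGraph Ω m).diam = m := by
  classical
  -- every pair at distance ≤ m
  have hub : ∀ A B : {y : Finset Ω // y.card = m},
      (oddGraph Ω m).edist A B ≤ (m : ℕ∞) := by
    intro A B
    have hsle : (A.1 ∩ B.1).card ≤ m := OddGraphAux.inter_card_le A.2
    obtain ⟨p, hp⟩ := OddGraphAux.walk_ub hm hΩ m A B (by rw [min_le_iff]; omega)
    calc (oddGraph Ω m).edist A B ≤ p.length := SimpleGraph.edist_le p
      _ ≤ (m : ℕ∞) := by exact_mod_cast hp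
  have hediam : (oddGraph Ω m).ediam ≤ (m : ℕ∞) :=
    SimpleGraph.ediam_le_of_edist_le hub
  have hne : (oddGraph Ω m).ediam ≠ ⊤ :=
    (lt_of_le_of_lt hediam (by exact_mod_cast ENat.coe_lt_top m)).ne
  -- build a pair at distance ≥ m
  obtain ⟨A, -, hA⟩ := Finset.exists_subset_card_eq
    (show m ≤ (Finset.univ : Finset Ω).card by rw [Finset.card_univ, hΩ]; omega)
  obtain ⟨S, hSsub, hScard⟩ := Finset.exists_subset_card_eq
    (show m / 2 ≤ A.card by rw [hA]; omega)
  have hAc : (Aᶜ).card = m + 1 := by rw [Finset.card_compl, hA, hΩ]; omega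
  obtain ⟨T, hTsub, hTcard⟩ := Finset.exists_subset_card_eq
    (show m - m / 2 ≤ (Aᶜ).card by rw [hAc]; omega)
  have hTA : Disjoint T A := Finset.disjoint_left.2 fun x hx hxA =>
    (Finset.mem_compl.1 (hTsub hx)) hxA
  have hST : Disjoint S T := Finset.disjoint_left.2 fun x hx hxT =>
    (Finset.mem_compl.1 (hTsub hxT)) (hSsub hx)
  have hB : (S ∪ T).card = m := by
    rw [Finset.card_union_of_disjoint hST, hScard, hTcard]; omega
  have hABint : (A ∩ (S ∪ T)).card = m / 2 := by
    have hEq : A ∩ (S ∪ T) = S := by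
      rw [Finset.inter_union_distrib_left,
        Finset.inter_eq_right.2 hSsub,
        Finset.disjoint_iff_inter_eq_empty.1 hTA.symm]
      simp
    rw [hEq, hScard]
  -- distance lower bound
  have hge : (m : ℕ) ≤ (oddGraph Ω m).dist ⟨A, hA⟩ ⟨S ∪ T, hB⟩ := by
    have hreach : (oddGraph Ω m).Reachable ⟨A, hA⟩ ⟨S ∪ T, hB⟩ := by
      obtain ⟨p, -⟩ := OddGraphAux.walk_ub hm hΩ m ⟨A, hA⟩ ⟨S ∪ T, hB⟩ (by
        have h5 : (A ∩ (S ∪ T)).card ≤ m := OddGraphAux.inter_card_le hA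
        rw [min_le_iff]; omega)
      exact ⟨p⟩
    obtain ⟨p, hp⟩ := hreach.exists_walk_length_eq_dist
    have hlb := OddGraphAux.walk_lb hΩ ⟨A, hA⟩ ⟨S ∪ T, hB⟩ p
    rw [hp] at hlb
    simp only [hABint] at hlb
    rw [min_le_iff] at hlb
    omega
  have hle : (oddGraph Ω m).dist ⟨A, hA⟩ ⟨S ∪ T, hB⟩ ≤ (oddGraph Ω m).diam :=
    SimpleGraph.dist_le_diam hne
  have hdle : (oddGraph Ω m).diam ≤ m := by
    have h6 := ENat.toNat_le_toNat hediam (by simp : (m : ℕ∞) ≠ ⊤)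
    simpa [SimpleGraph.diam] using h6
  omega
end

section
/- Let A be the adjacency matrix of the Odd graph O_{m+1} and fix a vertex x. For 0 ≤ i ≤ j ≤ m, the submatrix A_{i,j} of A with rows indexed by the sphere Γ_i(x) and columns by Γ_j(x) is the zero matrix whenever i ≠ j − 1 and (i,j) ≠ (m,m). In other words, two vertices at distances i and j from x with i ≤ j ≤ m are never adjacent unless j = i+1 or i = j = m. -/
section Aux

variable {Ω : Type*} [DecidableEq Ω] [Fintype Ω] {m : ℕ}

/-- Disjoint `m`-sets with `m ≥ 1` are adjacent in the odd graph. -/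
lemma oddGraph_adj_of_disjoint (hm : 1 ≤ m) {u v : {s : Finset Ω // s.card = m}}
    (h : Disjoint u.1 v.1) : (oddGraph Ω m).Adj u v := by
  refine ⟨?_, h⟩
  rintro rfl
  have h0 : u.1 = ∅ := disjoint_self.mp h
  have := u.2
  rw [h0] at this
  simp at this
  omega

/-- Bounds on intersections with a fixed `x` along an edge of the odd graph. -/
lemma oddGraph_edge_bounds (hΩ : Fintype.card Ω = 2 * m + 1)
    (x : {s : Finset Ω // s.card = m}) {u v : {s : Finset Ω // s.card = m}}
    (h : (oddGraph Ω m).Adj u v) :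
    (x.1 ∩ u.1).card + (x.1 ∩ v.1).card ≤ m ∧
      m ≤ (x.1 ∩ u.1).card + (x.1 ∩ v.1).card + 1 := by
  obtain ⟨-, hd⟩ := h
  have hdisj : Disjoint (x.1 ∩ u.1) (x.1 ∩ v.1) :=
    hd.mono Finset.inter_subset_right Finset.inter_subset_right
  constructor
  · calc (x.1 ∩ u.1).card + (x.1 ∩ v.1).card
        = ((x.1 ∩ u.1) ∪ (x.1 ∩ v.1)).card := (Finset.card_union_of_disjoint hdisj).symm
      _ ≤ x.1.card := Finset.card_le_card (Finset.union_subset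
            Finset.inter_subset_left Finset.inter_subset_left)
      _ = m := x.2
  · have huv : (u.1 ∪ v.1).card = 2 * m := by
      rw [Finset.card_union_of_disjoint hd, u.2, v.2]; ring
    have h1 : (x.1 ∩ (u.1 ∪ v.1)).card + (x.1 \ (u.1 ∪ v.1)).card = x.1.card :=
      Finset.card_inter_add_card_sdiff _ _
    have h2 : (x.1 ∩ (u.1 ∪ v.1)).card ≤ (x.1 ∩ u.1).card + (x.1 ∩ v.1).card := by
      rw [Finset.inter_union_distrib_left]
      exact Finset.card_union_le _ _
    have h3 : (x.1 \ (u.1 ∪ v.1)).card ≤ 1 := by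
      have hsub : x.1 \ (u.1 ∪ v.1) ⊆ (u.1 ∪ v.1)ᶜ := by
        intro a ha
        simp only [Finset.mem_sdiff] at ha
        simpa using ha.2
      have := Finset.card_le_card hsub
      rw [Finset.card_compl, huv, hΩ] at this
      omega
    have := x.2
    omega

/-- The odd graph is connected (any two vertices are reachable). -/
lemma oddGraph_reachable (hm : 1 ≤ m) (hΩ : Fintype.card Ω = 2 * m + 1)
    (a b : {s : Finset Ω // s.card = m}) : (oddGraph Ω m).Reachable a b := by
  suffices H : ∀ n (a b : {s : Finset Ω // s.card = m}), (a.1 \ b.1).card = n →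
      (oddGraph Ω m).Reachable a b from H _ a b rfl
  intro n
  induction n with
  | zero =>
    intro a b h
    have hsub : a.1 ⊆ b.1 := by
      rw [← Finset.sdiff_eq_empty_iff_subset]
      exact Finset.card_eq_zero.mp h
    have : a = b := Subtype.ext (Finset.eq_of_subset_of_card_le hsub (by rw [a.2, b.2]))
    exact this ▸ SimpleGraph.Reachable.refl a
  | succ n ih =>
    intro a b h
    obtain ⟨e, he⟩ : (a.1 \ b.1).Nonempty := Finset.card_pos.mp (by omega)
    obtain ⟨f, hf⟩ : (b.1 \ a.1).Nonempty := by
      apply Finset.card_pos.mp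
      rw [Finset.card_sdiff_comm (by rw [a.2, b.2])] at h
      omega
    rw [Finset.mem_sdiff] at he hf
    have hfa : f ∉ a.1.erase e := fun hx => hf.2 (Finset.mem_of_mem_erase hx)
    have ha'card : (insert f (a.1.erase e)).card = m := by
      rw [Finset.card_insert_of_notMem hfa, Finset.card_erase_of_mem he.1, a.2]
      omega
    set A' : {s : Finset Ω // s.card = m} := ⟨insert f (a.1.erase e), ha'card⟩ with hA'
    have hstep : (A'.1 \ b.1).card = n := by
      have hset : A'.1 \ b.1 = (a.1 \ b.1).erase e := by
        ext g
        simp only [hA', Finset.mem_sdiff, Finset.mem_insert, Finset.mem_erase]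
        constructor
        · rintro ⟨hg1 | ⟨hg1, hg2⟩, hg3⟩
          · exact absurd (hg1 ▸ hf.1) hg3
          · exact ⟨hg1, hg2, hg3⟩
        · rintro ⟨hg1, hg2, hg3⟩
          exact ⟨Or.inr ⟨hg1, hg2⟩, hg3⟩
      rw [hset, Finset.card_erase_of_mem (Finset.mem_sdiff.mpr he), h]
      omega
    have hunion : a.1 ∪ A'.1 = insert f a.1 := by
      ext g
      simp only [hA', Finset.mem_union, Finset.mem_insert, Finset.mem_erase]
      constructor
      · rintro (hg | hg | ⟨-, hg⟩) <;> tauto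
      · rintro (hg | hg) <;> tauto
    have hccard : ((a.1 ∪ A'.1)ᶜ).card = m := by
      rw [Finset.card_compl, hunion, Finset.card_insert_of_notMem hf.2, a.2, hΩ]
      omega
    set C : {s : Finset Ω // s.card = m} := ⟨(a.1 ∪ A'.1)ᶜ, hccard⟩ with hC
    have haC : (oddGraph Ω m).Adj a C :=
      oddGraph_adj_of_disjoint hm
        (Disjoint.mono_left Finset.subset_union_left disjoint_compl_right)
    have hCA' : (oddGraph Ω m).Adj C A' :=
      ((oddGraph_adj_of_disjoint hm
        (Disjoint.mono_left Finset.subset_union_right disjoint_compl_right)).symm)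
    exact ((haC.reachable).trans hCA'.reachable).trans (ih A' b hstep)

/-- The parity invariant along walks of the odd graph: for a walk of even length the
intersection sizes with `x` at the two ends differ by at most half the length, and for a
walk of odd length their sum is within the appropriate window around `m`. -/
lemma oddGraph_walk_bound (hΩ : Fintype.card Ω = 2 * m + 1)
    (x : {s : Finset Ω // s.card = m}) {u v : {s : Finset Ω // s.card = m}}
    (p : (oddGraph Ω m).Walk u v) :
    (Even p.length →
      2 * (x.1 ∩ u.1).card ≤ 2 * (x.1 ∩ v.1).card + p.length ∧
        2 * (x.1 ∩ v.1).card ≤ 2 * (x.1 ∩ u.1).card + p.length) ∧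
    (Odd p.length →
      2 * (x.1 ∩ u.1).card + 2 * (x.1 ∩ v.1).card + 1 ≤ 2 * m + p.length ∧
        2 * m ≤ 2 * (x.1 ∩ u.1).card + 2 * (x.1 ∩ v.1).card + p.length + 1) := by
  induction p with
  | nil => simp [Nat.not_odd_iff_even.mpr Even.zero]
  | @cons a w c hadj q ih =>
    obtain ⟨e1, e2⟩ := oddGraph_edge_bounds hΩ x hadj
    rw [SimpleGraph.Walk.length_cons]
    constructor
    · intro hpe
      have hq : Odd q.length := by
        rcases Nat.even_or_odd q.length with hq | hq
        · obtain ⟨k, hk⟩ := hpe; obtain ⟨l, hl⟩ := hq; omega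
        · exact hq
      obtain ⟨b1, b2⟩ := ih.2 hq
      obtain ⟨k, hk⟩ := hq
      omega
    · intro hpo
      have hq : Even q.length := by
        rcases Nat.even_or_odd q.length with hq | hq
        · exact hq
        · obtain ⟨k, hk⟩ := hpo; obtain ⟨l, hl⟩ := hq; omega
      obtain ⟨b1, b2⟩ := ih.1 hq
      obtain ⟨k, hk⟩ := hq
      omega

end Aux

theorem stmt6 (Ω : Type*) [DecidableEq Ω] [Fintype Ω] (m : ℕ) (hm : 1 ≤ m)
    (hΩ : Fintype.card Ω = 2 * m + 1) (x y z : {s : Finset Ω // s.card = m})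
    (i j : ℕ) (hij : i ≤ j) (hjm : j ≤ m)
    (hy : (oddGraph Ω m).dist x y = i) (hz : (oddGraph Ω m).dist x z = j)
    (hadj : (oddGraph Ω m).Adj y z) :
    j = i + 1 ∨ (i = m ∧ j = m) := by
  have hconn : (oddGraph Ω m).Connected := by
    have : Nonempty {s : Finset Ω // s.card = m} := ⟨x⟩
    exact ⟨fun a b => oddGraph_reachable hm hΩ a b⟩
  have hyz : (oddGraph Ω m).dist y z = 1 := SimpleGraph.dist_eq_one_iff_adj.mpr hadj
  have htri : (oddGraph Ω m).dist x z ≤ (oddGraph Ω m).dist x y + (oddGraph Ω m).dist y z :=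
    hconn.dist_triangle
  rw [hy, hz, hyz] at htri
  rcases Nat.lt_or_ge j (i + 1) with hji | hji
  · -- j = i : produce an odd closed walk of length 2i+1 through x
    have hji' : j = i := by omega
    subst hji'
    obtain ⟨p, hp⟩ := (oddGraph_reachable hm hΩ x y).exists_walk_length_eq_dist
    obtain ⟨q, hq⟩ := (oddGraph_reachable hm hΩ x z).exists_walk_length_eq_dist
    set w : (oddGraph Ω m).Walk x x := p.append (SimpleGraph.Walk.cons hadj q.reverse) with hw
    have hwlen : w.length = 2 * j + 1 := by
      rw [hw, SimpleGraph.Walk.length_append, SimpleGraph.Walk.length_cons,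
        SimpleGraph.Walk.length_reverse, hp, hq, hy, hz]
      omega
    have hodd : Odd w.length := by rw [hwlen]; exact ⟨j, by omega⟩
    have hb := (oddGraph_walk_bound hΩ x w).2 hodd |>.1
    rw [Finset.inter_self, x.2, hwlen] at hb
    right
    omega
  · left; omega
end

section
/- In the Odd graph O_{m+1} with fixed vertex x, identify each vertex y ∈ Γ_{2i}(x) with the pair (y ∩ x, y \ x) ∈ (x choose m−i) × ((Ω∖x) choose i) and each z ∈ Γ_{2i+1}(x) with (z ∩ x, z \ x) ∈ (x choose i) × ((Ω∖x) choose m−i). Under these identifications, the block A_{2i,2i+1} of the adjacency matrix equals the Kronecker product H^0_{m−i,i}(m) ⊗ H^0_{i,m−i}(m+1), for 0 ≤ i ≤ ⌈m/2⌉ − 1. -/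
instance (Ω : Type*) [DecidableEq Ω] (m : ℕ) : DecidableRel (oddGraph Ω m).Adj :=
  fun _ _ => instDecidableAnd

namespace OddAux

set_option linter.unusedSectionVars false

variable {Ω : Type*} [DecidableEq Ω] [Fintype Ω] {m : ℕ}

/-- The distance formula value. -/
def fd (m s : ℕ) : ℕ := min (2 * (m - s)) (2 * s + 1)

lemma card_inter_le (u v : {y : Finset Ω // y.card = m}) : (u.1 ∩ v.1).card ≤ m :=
  le_trans (Finset.card_le_card Finset.inter_subset_left) (le_of_eq u.2)

lemma card_sdiff_eq (u v : {y : Finset Ω // y.card = m}) :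
    (u.1 \ v.1).card = m - (u.1 ∩ v.1).card := by
  have h := Finset.card_inter_add_card_sdiff u.1 v.1
  rw [u.2] at h
  omega

lemma eq_of_full_inter (u v : {y : Finset Ω // y.card = m})
    (h : (u.1 ∩ v.1).card = m) : u = v := by
  have h1 : u.1 ∩ v.1 = u.1 :=
    Finset.eq_of_subset_of_card_le Finset.inter_subset_left (by rw [h, u.2])
  have h2 : u.1 ⊆ v.1 := by rw [← h1]; exact Finset.inter_subset_right
  exact Subtype.ext (Finset.eq_of_subset_of_card_le h2 (by rw [u.2, v.2]))

/-- If `w` is disjoint from `u`, then `|w ∩ v|` is within 1 of `m - |u ∩ v|`. -/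
lemma step (hΩ : Fintype.card Ω = 2 * m + 1) (u w v : {y : Finset Ω // y.card = m})
    (hd : Disjoint u.1 w.1) :
    m - (u.1 ∩ v.1).card - 1 ≤ (w.1 ∩ v.1).card ∧
      (w.1 ∩ v.1).card ≤ m - (u.1 ∩ v.1).card := by
  have hsub : w.1 ⊆ u.1ᶜ := by
    intro a ha
    rw [Finset.mem_compl]
    exact fun hau => (Finset.disjoint_left.mp hd) hau ha
  have hvu : (v.1 \ u.1).card = m - (u.1 ∩ v.1).card := by
    rw [card_sdiff_eq v u, Finset.inter_comm]
  -- upper bound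
  have hup : w.1 ∩ v.1 ⊆ v.1 \ u.1 := by
    intro a ha
    rw [Finset.mem_inter] at ha
    rw [Finset.mem_sdiff]
    exact ⟨ha.2, fun hau => (Finset.disjoint_left.mp hd) hau ha.1⟩
  have h1 : (w.1 ∩ v.1).card ≤ m - (u.1 ∩ v.1).card := by
    rw [← hvu]; exact Finset.card_le_card hup
  -- lower bound
  have hlo : v.1 \ u.1 ⊆ (w.1 ∩ v.1) ∪ (u.1ᶜ \ w.1) := by
    intro a ha
    rw [Finset.mem_sdiff] at ha
    rw [Finset.mem_union, Finset.mem_inter, Finset.mem_sdiff, Finset.mem_compl]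
    by_cases haw : a ∈ w.1
    · exact Or.inl ⟨haw, ha.1⟩
    · exact Or.inr ⟨ha.2, haw⟩
  have hcompl : (u.1ᶜ : Finset Ω).card = m + 1 := by
    rw [Finset.card_compl, u.2, hΩ]; omega
  have hone : (u.1ᶜ \ w.1).card = 1 := by
    rw [Finset.card_sdiff_of_subset hsub, hcompl, w.2]; omega
  have h2 := le_trans (Finset.card_le_card hlo) (Finset.card_union_le _ _)
  rw [hvu, hone] at h2
  omega

/-- Lower bound: every walk from `u` to `v` has length at least `fd m |u∩v|`. -/
lemma walk_lb (hΩ : Fintype.card Ω = 2 * m + 1) :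
    ∀ {u v : {y : Finset Ω // y.card = m}} (p : (oddGraph Ω m).Walk u v),
      fd m (u.1 ∩ v.1).card ≤ p.length := by
  intro u v p
  induction p with
  | @nil a =>
    simp only [fd, Finset.inter_self, a.2, SimpleGraph.Walk.length_nil]
    omega
  | @cons u w v h p ih =>
    have hs := step hΩ u w v h.2
    have h1 := card_inter_le u v
    have h2 := card_inter_le w v
    rw [SimpleGraph.Walk.length_cons]
    simp only [fd] at ih ⊢
    omega

/-- Upper bound: there is a walk from `u` to `v` of length at most `fd m |u∩v|`. -/
lemma walk_ub (hΩ : Fintype.card Ω = 2 * m + 1) (hm : 1 ≤ m) :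
    ∀ (n : ℕ) (u v : {y : Finset Ω // y.card = m}), fd m (u.1 ∩ v.1).card ≤ n →
      ∃ p : (oddGraph Ω m).Walk u v, p.length ≤ fd m (u.1 ∩ v.1).card := by
  intro n
  induction n with
  | zero =>
    intro u v h
    have hle := card_inter_le u v
    have hs : (u.1 ∩ v.1).card = m := by simp only [fd] at h; omega
    obtain rfl := eq_of_full_inter u v hs
    exact ⟨.nil, by simp⟩
  | succ n ih =>
    intro u v h
    have hsm : (u.1 ∩ v.1).card ≤ m := card_inter_le u v
    by_cases h0 : (u.1 ∩ v.1).card = m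
    · obtain rfl := eq_of_full_inter u v h0
      exact ⟨.nil, by simp⟩
    · set s := (u.1 ∩ v.1).card with hsdef
      have hslt : s < m := lt_of_le_of_ne hsm h0
      have hvu : v.1 \ u.1 ⊆ u.1ᶜ := by
        intro a ha
        rw [Finset.mem_sdiff] at ha
        rw [Finset.mem_compl]
        exact ha.2
      have hcvu : (v.1 \ u.1).card = m - s := by
        rw [card_sdiff_eq v u, Finset.inter_comm]
      have hcompl : (u.1ᶜ : Finset Ω).card = m + 1 := by
        rw [Finset.card_compl, u.2, hΩ]; omega
      by_cases c : 2 * s + 1 ≤ 2 * (m - s)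
      · -- odd branch: take w ⊇ v \ u disjoint from u
        obtain ⟨w, hw1, hw2, hw3⟩ :=
          Finset.exists_subsuperset_card_eq hvu (by omega : (v.1 \ u.1).card ≤ m)
            (by omega : m ≤ (u.1ᶜ : Finset Ω).card)
        set W : {y : Finset Ω // y.card = m} := ⟨w, hw3⟩ with hWdef
        have hdisj : Disjoint u.1 W.1 := by
          rw [Finset.disjoint_left]
          intro a hau haw
          exact (Finset.mem_compl.mp (hw2 haw)) hau
        have hne : u ≠ W := by
          intro he
          rw [← he] at hdisj
          obtain ⟨b, hb⟩ := Finset.card_pos.mp (show 0 < u.1.card by rw [u.2]; omega)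
          exact (Finset.disjoint_left.mp hdisj) hb hb
        have hWv : (W.1 ∩ v.1).card = m - s := by
          have heq : W.1 ∩ v.1 = v.1 \ u.1 := by
            apply Finset.Subset.antisymm
            · intro a ha
              rw [Finset.mem_inter] at ha
              rw [Finset.mem_sdiff]
              exact ⟨ha.2, Finset.mem_compl.mp (hw2 ha.1)⟩
            · intro a ha
              rw [Finset.mem_inter]
              exact ⟨hw1 ha, (Finset.mem_sdiff.mp ha).1⟩
          rw [heq, hcvu]
        have hfd : fd m (m - s) = 2 * s := by simp only [fd]; omega
        have hn : fd m ((W.1 ∩ v.1).card) ≤ n := by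
          rw [hWv, hfd]
          simp only [fd] at h
          omega
        obtain ⟨p, hp⟩ := ih W v hn
        rw [hWv, hfd] at hp
        refine ⟨.cons (show (oddGraph Ω m).Adj u W from ⟨hne, hdisj⟩) p, ?_⟩
        rw [SimpleGraph.Walk.length_cons]
        simp only [fd]
        omega
      · -- even branch: drop one element of v \ u
        have hnonempty : (v.1 \ u.1).Nonempty := by
          rw [← Finset.card_pos, hcvu]; omega
        obtain ⟨a, ha⟩ := hnonempty
        have hau : a ∈ u.1ᶜ := hvu ha
        have hsub : {a} ⊆ u.1ᶜ := Finset.singleton_subset_iff.mpr hau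
        have hwcard : ((u.1ᶜ \ {a}) : Finset Ω).card = m := by
          rw [Finset.card_sdiff_of_subset hsub, hcompl, Finset.card_singleton]; omega
        set W : {y : Finset Ω // y.card = m} := ⟨u.1ᶜ \ {a}, hwcard⟩ with hWdef
        have hdisj : Disjoint u.1 W.1 := by
          rw [Finset.disjoint_left]
          intro b hbu hbw
          have := (Finset.mem_sdiff.mp hbw).1
          exact (Finset.mem_compl.mp this) hbu
        have hne : u ≠ W := by
          intro he
          rw [← he] at hdisj
          obtain ⟨b, hb⟩ := Finset.card_pos.mp (show 0 < u.1.card by rw [u.2]; omega)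
          exact (Finset.disjoint_left.mp hdisj) hb hb
        have hWv : (W.1 ∩ v.1).card = m - s - 1 := by
          have heq : W.1 ∩ v.1 = (v.1 \ u.1) \ {a} := by
            apply Finset.Subset.antisymm
            · intro b hb
              rw [Finset.mem_inter] at hb
              obtain ⟨hbw, hbv⟩ := hb
              rw [Finset.mem_sdiff] at hbw ⊢
              rw [Finset.mem_sdiff]
              exact ⟨⟨hbv, Finset.mem_compl.mp hbw.1⟩, hbw.2⟩
            · intro b hb
              rw [Finset.mem_sdiff] at hb
              obtain ⟨hbvu, hba⟩ := hb
              rw [Finset.mem_sdiff] at hbvu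
              rw [Finset.mem_inter]
              refine ⟨Finset.mem_sdiff.mpr ⟨Finset.mem_compl.mpr hbvu.2, hba⟩, hbvu.1⟩
          rw [heq, Finset.card_sdiff_of_subset (Finset.singleton_subset_iff.mpr ha), hcvu,
            Finset.card_singleton]
        have hfd : fd m (m - s - 1) = 2 * (m - s) - 1 := by simp only [fd]; omega
        have hn : fd m ((W.1 ∩ v.1).card) ≤ n := by
          rw [hWv, hfd]
          simp only [fd] at h
          omega
        obtain ⟨p, hp⟩ := ih W v hn
        rw [hWv, hfd] at hp
        refine ⟨.cons (show (oddGraph Ω m).Adj u W from ⟨hne, hdisj⟩) p, ?_⟩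
        rw [SimpleGraph.Walk.length_cons]
        simp only [fd]
        omega

/-- The distance formula in the Odd graph. -/
lemma dist_eq (hΩ : Fintype.card Ω = 2 * m + 1) (hm : 1 ≤ m)
    (u v : {y : Finset Ω // y.card = m}) :
    (oddGraph Ω m).dist u v = fd m (u.1 ∩ v.1).card := by
  obtain ⟨p, hp⟩ := walk_ub hΩ hm (fd m (u.1 ∩ v.1).card) u v le_rfl
  have hub := le_trans (SimpleGraph.dist_le p) hp
  have hr : (oddGraph Ω m).Reachable u v := ⟨p⟩
  obtain ⟨q, hq⟩ := hr.exists_walk_length_eq_dist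
  have hlb := walk_lb hΩ q
  omega

lemma disjoint_split (x y z : Finset Ω) :
    Disjoint y z ↔ (Disjoint (y ∩ x) (z ∩ x) ∧ Disjoint (y \ x) (z \ x)) := by
  simp only [Finset.disjoint_left, Finset.mem_inter, Finset.mem_sdiff]
  constructor
  · intro h
    exact ⟨fun a ha hb => h ha.1 hb.1, fun a ha hb => h ha.1 hb.1⟩
  · rintro ⟨h1, h2⟩ a hay haz
    by_cases hx : a ∈ x
    · exact h1 ⟨hay, hx⟩ ⟨haz, hx⟩
    · exact h2 ⟨hay, hx⟩ ⟨haz, hx⟩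

end OddAux

/-- The block `A_{2i,2i+1}` equals the Kronecker product `H⁰_{m−i,i}(m) ⊗ H⁰_{i,m−i}(m+1)`:
identifying `y ∈ Γ_{2i}(x)` with `(y ∩ x, y \ x)` and `z ∈ Γ_{2i+1}(x)` with
`(z ∩ x, z \ x)`, the `(y,z)`-entry of the adjacency matrix is the product of the
disjointness indicators of the two coordinate pairs. -/
theorem stmt7 (Ω : Type*) [DecidableEq Ω] [Fintype Ω] (m : ℕ) (hm : 1 ≤ m)
    (hΩ : Fintype.card Ω = 2 * m + 1) (x : {s : Finset Ω // s.card = m})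
    (i : ℕ) (hi : i + 1 ≤ (m + 1) / 2) :
    ∀ y z : {s : Finset Ω // s.card = m},
      (oddGraph Ω m).dist x y = 2 * i → (oddGraph Ω m).dist x z = 2 * i + 1 →
        (y.1 ∩ x.1).card = m - i ∧ (y.1 \ x.1).card = i ∧
        (z.1 ∩ x.1).card = i ∧ (z.1 \ x.1).card = m - i ∧
        (if (oddGraph Ω m).Adj y z then (1 : ℂ) else 0) =
          (if Disjoint (y.1 ∩ x.1) (z.1 ∩ x.1) then (1 : ℂ) else 0) *
          (if Disjoint (y.1 \ x.1) (z.1 \ x.1) then (1 : ℂ) else 0) := by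
  intro y z hy hz
  have hdy := OddAux.dist_eq hΩ hm x y
  have hdz := OddAux.dist_eq hΩ hm x z
  rw [hy] at hdy
  rw [hz] at hdz
  simp only [OddAux.fd] at hdy hdz
  have hym : (x.1 ∩ y.1).card ≤ m := OddAux.card_inter_le x y
  have hzm : (x.1 ∩ z.1).card ≤ m := OddAux.card_inter_le x z
  have hsy : (x.1 ∩ y.1).card = m - i := by omega
  have hsz : (x.1 ∩ z.1).card = i := by omega
  have him : i ≤ m := by omega
  have g1 : (y.1 ∩ x.1).card = m - i := by rw [Finset.inter_comm]; omega
  have g2 : (y.1 \ x.1).card = i := by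
    rw [OddAux.card_sdiff_eq y x, g1]; omega
  have g3 : (z.1 ∩ x.1).card = i := by rw [Finset.inter_comm]; omega
  have g4 : (z.1 \ x.1).card = m - i := by
    rw [OddAux.card_sdiff_eq z x, g3]
  refine ⟨g1, g2, g3, g4, ?_⟩
  have hne : y ≠ z := by
    intro he
    rw [he] at hy
    omega
  have hA : (oddGraph Ω m).Adj y z ↔
      (Disjoint (y.1 ∩ x.1) (z.1 ∩ x.1) ∧ Disjoint (y.1 \ x.1) (z.1 \ x.1)) := by
    constructor
    · intro h
      exact (OddAux.disjoint_split x.1 y.1 z.1).mp h.2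
    · intro h
      exact ⟨hne, (OddAux.disjoint_split x.1 y.1 z.1).mpr h⟩
  by_cases hD1 : Disjoint (y.1 ∩ x.1) (z.1 ∩ x.1) <;>
    by_cases hD2 : Disjoint (y.1 \ x.1) (z.1 \ x.1) <;>
    simp [hA, hD1, hD2]
end

section
/- In the Odd graph O_{m+1} with fixed vertex x, under the identification of y ∈ Γ_{2i+1}(x) with (y ∩ x, y \ x) and y' ∈ Γ_{2i+2}(x) with (y' ∩ x, y' \ x), the block A_{2i+1,2i+2} of the adjacency matrix equals H^0_{i,m−i−1}(m) ⊗ H^0_{m−i,i+1}(m+1), for 0 ≤ i ≤ ⌊m/2⌋ − 1. -/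
lemma inter_card_bounds {Ω : Type*} [DecidableEq Ω] [Fintype Ω] {m : ℕ}
    (hΩ : Fintype.card Ω = 2 * m + 1) {x y z : Finset Ω}
    (hx : x.card = m) (hy : y.card = m) (hz : z.card = m) (h : Disjoint y z) :
    (x ∩ y).card + (x ∩ z).card ≤ m ∧ m ≤ (x ∩ y).card + (x ∩ z).card + 1 := by
  have hd : Disjoint (x ∩ y) (x ∩ z) :=
    h.mono Finset.inter_subset_right Finset.inter_subset_right
  have hu : (x ∩ y) ∪ (x ∩ z) = x ∩ (y ∪ z) :=
    (Finset.inter_union_distrib_left x y z).symm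
  have hcu : (x ∩ (y ∪ z)).card = (x ∩ y).card + (x ∩ z).card := by
    rw [← hu, Finset.card_union_of_disjoint hd]
  have h1 : (y ∪ z).card = 2 * m := by
    rw [Finset.card_union_of_disjoint h, hy, hz]; ring
  have h2 : (x \ (y ∪ z)).card ≤ 1 := by
    have hsub : x \ (y ∪ z) ⊆ Finset.univ \ (y ∪ z) :=
      Finset.sdiff_subset_sdiff (Finset.subset_univ x) le_rfl
    have := Finset.card_le_card hsub
    rw [Finset.card_sdiff_of_subset (Finset.subset_univ _), Finset.card_univ, hΩ, h1] at this
    omega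
  have h3 := Finset.card_inter_add_card_sdiff x (y ∪ z)
  have h4 : (x ∩ (y ∪ z)).card ≤ x.card :=
    Finset.card_le_card Finset.inter_subset_left
  omega

lemma walk_lb {Ω : Type*} [DecidableEq Ω] [Fintype Ω] {m : ℕ}
    (hΩ : Fintype.card Ω = 2 * m + 1) :
    ∀ (x y : {s : Finset Ω // s.card = m}) (p : (oddGraph Ω m).Walk y x),
      min (2 * (m - (x.1 ∩ y.1).card)) (2 * (x.1 ∩ y.1).card + 1) ≤ p.length := by
  intro x y p
  induction p with
  | @nil u =>
    rw [Finset.inter_self, u.2]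
    simp
  | @cons a b c h p ih =>
    have hb := inter_card_bounds hΩ c.2 a.2 b.2 h.2
    have hba : (c.1 ∩ a.1).card ≤ m :=
      le_trans (Finset.card_le_card Finset.inter_subset_left) (le_of_eq c.2)
    have hbb : (c.1 ∩ b.1).card ≤ m :=
      le_trans (Finset.card_le_card Finset.inter_subset_left) (le_of_eq c.2)
    simp only [SimpleGraph.Walk.length_cons]
    omega

lemma walk_ub {Ω : Type*} [DecidableEq Ω] [Fintype Ω] {m : ℕ} (hm : 1 ≤ m)
    (hΩ : Fintype.card Ω = 2 * m + 1) :
    ∀ (d : ℕ) (y z : {s : Finset Ω // s.card = m}),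
      min (2 * (m - (y.1 ∩ z.1).card)) (2 * (y.1 ∩ z.1).card + 1) ≤ d →
      ∃ p : (oddGraph Ω m).Walk y z, p.length ≤ d := by
  intro d
  induction d using Nat.strong_induction_on with
  | _ d IH =>
    intro y z hmin
    set j := (y.1 ∩ z.1).card with hj
    have hjm : j ≤ m := z.2 ▸ Finset.card_le_card Finset.inter_subset_right
    by_cases hjeq : j = m
    · -- y = z
      have h1 : y.1 ∩ z.1 = z.1 :=
        Finset.eq_of_subset_of_card_le Finset.inter_subset_right (by rw [z.2, ← hj, hjeq])
      have h2 : z.1 ⊆ y.1 := h1 ▸ Finset.inter_subset_left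
      have h3 : y.1 = z.1 := (Finset.eq_of_subset_of_card_le h2 (by rw [y.2, z.2])).symm
      have : y = z := Subtype.ext h3
      subst this
      exact ⟨SimpleGraph.Walk.nil, by simp⟩
    · have hjlt : j < m := lt_of_le_of_ne hjm hjeq
      have hcompl : (Finset.univ \ y.1).card = m + 1 := by
        rw [Finset.card_sdiff_of_subset (Finset.subset_univ _), Finset.card_univ, hΩ, y.2]; omega
      have hzy : (z.1 \ y.1).card = m - j := by
        have := Finset.card_inter_add_card_sdiff z.1 y.1
        rw [z.2, Finset.inter_comm] at this
        omega
      have hsub : z.1 \ y.1 ⊆ Finset.univ \ y.1 :=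
        Finset.sdiff_subset_sdiff (Finset.subset_univ _) le_rfl
      by_cases hA : 2 * j + 1 ≤ d
      · -- odd bound: pick w ⊆ univ \ y with z\y ⊆ w, |w| = m
        obtain ⟨u, hu1, hu2, hu3⟩ := Finset.exists_subsuperset_card_eq (n := m) hsub
          (by rw [hzy]; omega) (by rw [hcompl]; omega)
        set w : {s : Finset Ω // s.card = m} := ⟨u, hu3⟩ with hw
        have hdisj : Disjoint y.1 u := by
          rw [Finset.disjoint_right]
          intro a ha
          exact (Finset.mem_sdiff.mp (hu2 ha)).2
        have hne : y ≠ w := by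
          intro he
          have h5 : y.1 = u := congrArg Subtype.val he
          rw [← h5] at hdisj
          have h6 := disjoint_self.mp hdisj
          have h7 := y.2
          rw [h6] at h7; simp at h7; omega
        have hadj : (oddGraph Ω m).Adj y w := ⟨hne, hdisj⟩
        have hwz : w.1 ∩ z.1 = z.1 \ y.1 := by
          apply Finset.Subset.antisymm
          · intro a ha
            have h1 := Finset.mem_inter.mp ha
            exact Finset.mem_sdiff.mpr ⟨h1.2, (Finset.mem_sdiff.mp (hu2 h1.1)).2⟩
          · intro a ha
            exact Finset.mem_inter.mpr ⟨hu1 ha, (Finset.mem_sdiff.mp ha).1⟩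
        have hwzc : (w.1 ∩ z.1).card = m - j := by rw [hwz, hzy]
        obtain ⟨p, hp⟩ := IH (d - 1) (by omega) w z (by rw [hwzc]; omega)
        exact ⟨SimpleGraph.Walk.cons hadj p, by simp only [SimpleGraph.Walk.length_cons]; omega⟩
      · -- even bound
        have hB : 2 * (m - j) ≤ d := by omega
        have hne' : (z.1 \ y.1).Nonempty := by
          rw [← Finset.card_pos, hzy]; omega
        obtain ⟨e, he⟩ := hne'
        set u := (Finset.univ \ y.1).erase e with hu
        have hu3 : u.card = m := by
          rw [hu, Finset.card_erase_of_mem (hsub he), hcompl]; omega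
        set w : {s : Finset Ω // s.card = m} := ⟨u, hu3⟩ with hw
        have hdisj : Disjoint y.1 u := by
          rw [Finset.disjoint_right]
          intro a ha
          exact (Finset.mem_sdiff.mp (Finset.mem_of_mem_erase ha)).2
        have hne : y ≠ w := by
          intro he2
          have h5 : y.1 = u := congrArg Subtype.val he2
          rw [← h5] at hdisj
          have h6 := disjoint_self.mp hdisj
          have h7 := y.2
          rw [h6] at h7; simp at h7; omega
        have hadj : (oddGraph Ω m).Adj y w := ⟨hne, hdisj⟩
        have hwz : w.1 ∩ z.1 = (z.1 \ y.1).erase e := by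
          apply Finset.Subset.antisymm
          · intro a ha
            have h1 := Finset.mem_inter.mp ha
            have h2 := Finset.mem_erase.mp h1.1
            exact Finset.mem_erase.mpr ⟨h2.1,
              Finset.mem_sdiff.mpr ⟨h1.2, (Finset.mem_sdiff.mp h2.2).2⟩⟩
          · intro a ha
            have h1 := Finset.mem_erase.mp ha
            exact Finset.mem_inter.mpr
              ⟨Finset.mem_erase.mpr ⟨h1.1, hsub h1.2⟩, (Finset.mem_sdiff.mp h1.2).1⟩
        have hwzc : (w.1 ∩ z.1).card = m - j - 1 := by
          rw [hwz, Finset.card_erase_of_mem he, hzy]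
        obtain ⟨p, hp⟩ := IH (d - 1) (by omega) w z (by rw [hwzc]; omega)
        exact ⟨SimpleGraph.Walk.cons hadj p, by simp only [SimpleGraph.Walk.length_cons]; omega⟩

lemma dist_eq_min {Ω : Type*} [DecidableEq Ω] [Fintype Ω] {m : ℕ} (hm : 1 ≤ m)
    (hΩ : Fintype.card Ω = 2 * m + 1) (x y : {s : Finset Ω // s.card = m}) :
    (oddGraph Ω m).dist x y
      = min (2 * (m - (x.1 ∩ y.1).card)) (2 * (x.1 ∩ y.1).card + 1) := by
  obtain ⟨p, hp⟩ := walk_ub hm hΩ _ x y le_rfl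
  have hle : (oddGraph Ω m).dist x y
      ≤ min (2 * (m - (x.1 ∩ y.1).card)) (2 * (x.1 ∩ y.1).card + 1) :=
    le_trans (SimpleGraph.dist_le p) hp
  rcases Nat.eq_zero_or_pos ((oddGraph Ω m).dist x y) with h0 | hpos
  · rw [h0]
    rcases SimpleGraph.dist_eq_zero_iff_eq_or_not_reachable.mp h0 with heq | hnr
    · subst heq
      rw [Finset.inter_self, x.2]
      simp
    · exact absurd ⟨p⟩ hnr
  · have hr : (oddGraph Ω m).Reachable x y := ⟨p⟩
    obtain ⟨q, hq⟩ := SimpleGraph.Reachable.exists_walk_length_eq_dist hr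
    have := walk_lb hΩ x y q.reverse
    rw [SimpleGraph.Walk.length_reverse, hq] at this
    omega

/-- The block `A_{2i+1,2i+2}` equals `H⁰_{i,m−i−1}(m) ⊗ H⁰_{m−i,i+1}(m+1)` under the
identification `y ↦ (y ∩ x, y \ x)`. -/
theorem stmt8 (Ω : Type*) [DecidableEq Ω] [Fintype Ω] (m : ℕ) (hm : 1 ≤ m)
    (hΩ : Fintype.card Ω = 2 * m + 1) (x : {s : Finset Ω // s.card = m})
    (i : ℕ) (hi : i + 1 ≤ m / 2) :
    ∀ y y' : {s : Finset Ω // s.card = m},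
      (oddGraph Ω m).dist x y = 2 * i + 1 → (oddGraph Ω m).dist x y' = 2 * i + 2 →
        (y.1 ∩ x.1).card = i ∧ (y.1 \ x.1).card = m - i ∧
        (y'.1 ∩ x.1).card = m - i - 1 ∧ (y'.1 \ x.1).card = i + 1 ∧
        (if (oddGraph Ω m).Adj y y' then (1 : ℂ) else 0) =
          (if Disjoint (y.1 ∩ x.1) (y'.1 ∩ x.1) then (1 : ℂ) else 0) *
          (if Disjoint (y.1 \ x.1) (y'.1 \ x.1) then (1 : ℂ) else 0) := by
  intro y y' hy hy'
  rw [dist_eq_min hm hΩ] at hy hy'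
  have hby : (x.1 ∩ y.1).card ≤ m :=
    le_trans (Finset.card_le_card Finset.inter_subset_left) (le_of_eq x.2)
  have hby' : (x.1 ∩ y'.1).card ≤ m :=
    le_trans (Finset.card_le_card Finset.inter_subset_left) (le_of_eq x.2)
  have hyi : (x.1 ∩ y.1).card = i := by omega
  have hy'i : (x.1 ∩ y'.1).card = m - i - 1 := by omega
  have h1 : (y.1 ∩ x.1).card = i := by rw [Finset.inter_comm]; exact hyi
  have h3 : (y'.1 ∩ x.1).card = m - i - 1 := by rw [Finset.inter_comm]; exact hy'i
  have h2 : (y.1 \ x.1).card = m - i := by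
    have := Finset.card_inter_add_card_sdiff y.1 x.1
    rw [y.2, h1] at this; omega
  have h4 : (y'.1 \ x.1).card = i + 1 := by
    have := Finset.card_inter_add_card_sdiff y'.1 x.1
    rw [y'.2, h3] at this; omega
  refine ⟨h1, h2, h3, h4, ?_⟩
  have hiff : (oddGraph Ω m).Adj y y' ↔
      Disjoint (y.1 ∩ x.1) (y'.1 ∩ x.1) ∧ Disjoint (y.1 \ x.1) (y'.1 \ x.1) := by
    constructor
    · intro h
      exact ⟨h.2.mono Finset.inter_subset_left Finset.inter_subset_left,
        h.2.mono Finset.sdiff_subset Finset.sdiff_subset⟩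
    · rintro ⟨ha, hb⟩
      have hdisj : Disjoint y.1 y'.1 := by
        rw [Finset.disjoint_left]
        intro a hay hay'
        by_cases hax : a ∈ x.1
        · exact Finset.disjoint_left.mp ha (Finset.mem_inter.mpr ⟨hay, hax⟩)
            (Finset.mem_inter.mpr ⟨hay', hax⟩)
        · exact Finset.disjoint_left.mp hb (Finset.mem_sdiff.mpr ⟨hay, hax⟩)
            (Finset.mem_sdiff.mpr ⟨hay', hax⟩)
      refine ⟨?_, hdisj⟩
      intro he
      rw [he] at hdisj
      have h6 := disjoint_self.mp hdisj
      have h7 := y'.2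
      rw [h6] at h7; simp at h7; omega
  by_cases hadj : (oddGraph Ω m).Adj y y'
  · obtain ⟨ha, hb⟩ := hiff.mp hadj
    rw [if_pos hadj, if_pos ha, if_pos hb]; ring
  · rw [if_neg hadj]
    rcases Decidable.not_and_iff_or_not.mp (fun h => hadj (hiff.mpr h)) with h | h
    · rw [if_neg h]; ring
    · rw [if_neg h]; ring
end

section
/- In the Odd graph O_{m+1} with fixed vertex x, the diagonal block A_{m,m} of the adjacency matrix (rows and columns indexed by Γ_m(x)), under the identification y ↦ (y ∩ x, y \ x), equals H^0_{⌊m/2⌋,⌊m/2⌋}(m) ⊗ H^0_{⌈m/2⌉,⌈m/2⌉}(m+1). -/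
section stmt9aux

variable {Ω : Type*} [DecidableEq Ω] [Fintype Ω] {m : ℕ}

private lemma odd_adj_of_disjoint (hm : 1 ≤ m) {a b : {s : Finset Ω // s.card = m}}
    (h : Disjoint a.1 b.1) : (oddGraph Ω m).Adj a b := by
  refine ⟨fun hab => ?_, h⟩
  have h0 : a.1 = ∅ := by have h' := h; rw [← hab] at h'; exact disjoint_self.mp h'
  have := a.2
  rw [h0, Finset.card_empty] at this
  omega

/-- Two steps: from `a` we can reach `a'` having one more common element with `y`. -/
private lemma two_step (hm : 1 ≤ m) (hΩ : Fintype.card Ω = 2 * m + 1)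
    (a y : {s : Finset Ω // s.card = m}) (hlt : (a.1 ∩ y.1).card < m) :
    ∃ a' : {s : Finset Ω // s.card = m}, (a'.1 ∩ y.1).card = (a.1 ∩ y.1).card + 1 ∧
      ∃ b : {s : Finset Ω // s.card = m},
        (oddGraph Ω m).Adj a b ∧ (oddGraph Ω m).Adj b a' := by
  have hya : (y.1 \ a.1).Nonempty := by
    rw [← Finset.card_pos]
    have h1 := Finset.card_sdiff_add_card_inter y.1 a.1
    rw [Finset.inter_comm] at h1
    rw [y.2] at h1
    omega
  have hay : (a.1 \ y.1).Nonempty := by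
    rw [← Finset.card_pos]
    have h1 := Finset.card_sdiff_add_card_inter a.1 y.1
    rw [a.2] at h1
    omega
  obtain ⟨p, hp⟩ := hya
  obtain ⟨q, hq⟩ := hay
  rw [Finset.mem_sdiff] at hp hq
  have hpa : p ∉ a.1 := hp.2
  have hqa : q ∈ a.1 := hq.1
  have hcard' : (insert p (a.1.erase q)).card = m := by
    rw [Finset.card_insert_of_notMem (fun h => hpa (Finset.erase_subset _ _ h)),
      Finset.card_erase_of_mem hqa, a.2]
    omega
  refine ⟨⟨insert p (a.1.erase q), hcard'⟩, ?_, ?_⟩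
  · show (insert p (a.1.erase q) ∩ y.1).card = _
    rw [Finset.insert_inter_of_mem hp.1, Finset.erase_inter,
      Finset.erase_eq_of_notMem (fun h => hq.2 (Finset.mem_inter.mp h).2),
      Finset.card_insert_of_notMem (fun h => hpa (Finset.mem_inter.mp h).1)]
  · have hbcard : ((insert p a.1)ᶜ).card = m := by
      rw [Finset.card_compl, Finset.card_insert_of_notMem hpa, a.2, hΩ]
      omega
    refine ⟨⟨(insert p a.1)ᶜ, hbcard⟩, ?_, ?_⟩
    · refine odd_adj_of_disjoint hm ?_
      exact Finset.disjoint_left.mpr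
        (fun t ht ht' => (Finset.mem_compl.mp ht') (Finset.mem_insert_of_mem ht))
    · refine odd_adj_of_disjoint hm ?_
      refine Finset.disjoint_left.mpr fun t ht ht' => (Finset.mem_compl.mp ht) ?_
      rcases Finset.mem_insert.mp ht' with h | h
      · exact h ▸ Finset.mem_insert_self _ _
      · exact Finset.mem_insert_of_mem (Finset.erase_subset _ _ h)

/-- Walk of even length `2*d` when the intersection with the target has size `m - d`. -/
private lemma walkA (hm : 1 ≤ m) (hΩ : Fintype.card Ω = 2 * m + 1) :
    ∀ (d : ℕ) (a y : {s : Finset Ω // s.card = m}), (a.1 ∩ y.1).card + d = m →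
      ∃ p : (oddGraph Ω m).Walk a y, p.length = 2 * d := by
  intro d
  induction d with
  | zero =>
    intro a y h
    have hsub : a.1 ∩ y.1 = a.1 :=
      Finset.eq_of_subset_of_card_le Finset.inter_subset_left (by rw [a.2]; omega)
    have hsub2 : a.1 ⊆ y.1 := hsub ▸ Finset.inter_subset_right
    have hay : a = y := Subtype.ext
      (Finset.eq_of_subset_of_card_le hsub2 (by rw [a.2, y.2]))
    subst hay
    exact ⟨SimpleGraph.Walk.nil, rfl⟩
  | succ d ih =>
    intro a y h
    obtain ⟨a', ha', b, hab, hba'⟩ := two_step hm hΩ a y (by omega)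
    obtain ⟨p, hp⟩ := ih a' y (by omega)
    refine ⟨SimpleGraph.Walk.cons hab (SimpleGraph.Walk.cons hba' p), ?_⟩
    simp only [SimpleGraph.Walk.length_cons, hp]
    omega

/-- Walk of odd length `2*i + 1` where `i` is the intersection size. -/
private lemma walkB (hm : 1 ≤ m) (hΩ : Fintype.card Ω = 2 * m + 1)
    (x y : {s : Finset Ω // s.card = m}) :
    ∃ p : (oddGraph Ω m).Walk x y, p.length = 2 * (x.1 ∩ y.1).card + 1 := by
  set i := (x.1 ∩ y.1).card with hi
  have hile : i ≤ m := by
    have h1 : (x.1 ∩ y.1).card ≤ x.1.card := Finset.card_le_card Finset.inter_subset_left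
    rw [x.2] at h1
    omega
  have hcardU : (x.1 ∪ y.1).card = 2 * m - i := by
    have h1 := Finset.card_union_add_card_inter x.1 y.1
    rw [x.2, y.2, ← hi] at h1
    omega
  have hcardC : ((x.1 ∪ y.1)ᶜ).card = i + 1 := by
    rw [Finset.card_compl, hcardU, hΩ]
    omega
  obtain ⟨T, hTsub, hTcard⟩ := Finset.exists_subset_card_eq (s := (x.1 ∪ y.1)ᶜ) (n := i)
    (by omega)
  have hTx : Disjoint T x.1 := Finset.disjoint_left.mpr fun t ht ht' =>
    (Finset.mem_compl.mp (hTsub ht)) (Finset.mem_union_left _ ht')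
  have hTy : Disjoint T y.1 := Finset.disjoint_left.mpr fun t ht ht' =>
    (Finset.mem_compl.mp (hTsub ht)) (Finset.mem_union_right _ ht')
  have hsdc : (y.1 \ x.1).card = m - i := by
    have h1 := Finset.card_sdiff_add_card_inter y.1 x.1
    rw [y.2, Finset.inter_comm, ← hi] at h1
    omega
  have hdj : Disjoint (y.1 \ x.1) T := Finset.disjoint_left.mpr
    fun t ht ht' => Finset.disjoint_right.mp hTy (Finset.mem_sdiff.mp ht).1 ht'
  have hbcard : ((y.1 \ x.1) ∪ T).card = m := by
    have h1 := Finset.card_union_add_card_inter (y.1 \ x.1) T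
    rw [Finset.disjoint_iff_inter_eq_empty.mp hdj, Finset.card_empty, hsdc, hTcard] at h1
    omega
  set b : {s : Finset Ω // s.card = m} := ⟨(y.1 \ x.1) ∪ T, hbcard⟩ with hb
  have hxb : (oddGraph Ω m).Adj x b := by
    refine odd_adj_of_disjoint hm ?_
    exact Finset.disjoint_union_right.mpr ⟨Finset.sdiff_disjoint.symm, hTx.symm⟩
  have hbY : b.1 ∩ y.1 = y.1 \ x.1 := by
    show ((y.1 \ x.1) ∪ T) ∩ y.1 = y.1 \ x.1
    rw [Finset.union_inter_distrib_right,
      Finset.inter_eq_left.mpr (Finset.sdiff_subset),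
      Finset.disjoint_iff_inter_eq_empty.mp hTy, Finset.union_empty]
  obtain ⟨p, hp⟩ := walkA hm hΩ i b y (by rw [hbY, hsdc]; omega)
  refine ⟨SimpleGraph.Walk.cons hxb p, ?_⟩
  simp only [SimpleGraph.Walk.length_cons, hp]

/-- Distance `m` from `x` forces intersection size `⌊m/2⌋`. -/
private lemma inter_card_of_dist (hm : 1 ≤ m) (hΩ : Fintype.card Ω = 2 * m + 1)
    (x y : {s : Finset Ω // s.card = m}) (hd : (oddGraph Ω m).dist x y = m) :
    (y.1 ∩ x.1).card = m / 2 := by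
  set i := (y.1 ∩ x.1).card with hi
  have hix : (x.1 ∩ y.1).card = i := by rw [Finset.inter_comm]
  have hile : i ≤ m := by
    have h1 : (y.1 ∩ x.1).card ≤ x.1.card := Finset.card_le_card Finset.inter_subset_right
    rw [x.2] at h1
    omega
  by_contra hne
  have hcase : 2 * (m - i) < m ∨ 2 * i + 1 < m := by omega
  rcases hcase with h | h
  · obtain ⟨p, hp⟩ := walkA hm hΩ (m - i) x y (by omega)
    have := SimpleGraph.dist_le p
    omega
  · obtain ⟨p, hp⟩ := walkB hm hΩ x y
    have := SimpleGraph.dist_le p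
    rw [hix] at hp
    omega

end stmt9aux

/-- The diagonal block `A_{m,m}` equals `H⁰_{⌊m/2⌋,⌊m/2⌋}(m) ⊗ H⁰_{⌈m/2⌉,⌈m/2⌉}(m+1)`
under the identification `y ↦ (y ∩ x, y \ x)`. -/
theorem stmt9 (Ω : Type*) [DecidableEq Ω] [Fintype Ω] (m : ℕ) (hm : 1 ≤ m)
    (hΩ : Fintype.card Ω = 2 * m + 1) (x : {s : Finset Ω // s.card = m}) :
    ∀ y z : {s : Finset Ω // s.card = m},
      (oddGraph Ω m).dist x y = m → (oddGraph Ω m).dist x z = m →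
        (y.1 ∩ x.1).card = m / 2 ∧ (y.1 \ x.1).card = (m + 1) / 2 ∧
        (z.1 ∩ x.1).card = m / 2 ∧ (z.1 \ x.1).card = (m + 1) / 2 ∧
        (if (oddGraph Ω m).Adj y z then (1 : ℂ) else 0) =
          (if Disjoint (y.1 ∩ x.1) (z.1 ∩ x.1) then (1 : ℂ) else 0) *
          (if Disjoint (y.1 \ x.1) (z.1 \ x.1) then (1 : ℂ) else 0) := by
  intro y z hy hz
  have hyc := inter_card_of_dist hm hΩ x y hy
  have hzc := inter_card_of_dist hm hΩ x z hz
  have hyd : (y.1 \ x.1).card = (m + 1) / 2 := by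
    have h1 := Finset.card_sdiff_add_card_inter y.1 x.1
    rw [y.2, hyc] at h1
    omega
  have hzd : (z.1 \ x.1).card = (m + 1) / 2 := by
    have h1 := Finset.card_sdiff_add_card_inter z.1 x.1
    rw [z.2, hzc] at h1
    omega
  refine ⟨hyc, hyd, hzc, hzd, ?_⟩
  have key : (oddGraph Ω m).Adj y z ↔
      Disjoint (y.1 ∩ x.1) (z.1 ∩ x.1) ∧ Disjoint (y.1 \ x.1) (z.1 \ x.1) := by
    constructor
    · intro ⟨_, hdisj⟩
      exact ⟨hdisj.mono Finset.inter_subset_left Finset.inter_subset_left,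
        hdisj.mono Finset.sdiff_subset Finset.sdiff_subset⟩
    · intro ⟨h1, h2⟩
      have hdisj : Disjoint y.1 z.1 := by
        refine Finset.disjoint_left.mpr fun t hty htz => ?_
        by_cases htx : t ∈ x.1
        · exact Finset.disjoint_left.mp h1 (Finset.mem_inter.mpr ⟨hty, htx⟩)
            (Finset.mem_inter.mpr ⟨htz, htx⟩)
        · exact Finset.disjoint_left.mp h2 (Finset.mem_sdiff.mpr ⟨hty, htx⟩)
            (Finset.mem_sdiff.mpr ⟨htz, htx⟩)
      exact odd_adj_of_disjoint hm hdisj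
  by_cases h1 : Disjoint (y.1 ∩ x.1) (z.1 ∩ x.1) <;>
    by_cases h2 : Disjoint (y.1 \ x.1) (z.1 \ x.1) <;>
      simp [key, h1, h2]
end

section
/- The Odd graph O_{m+1} is 'almost bipartite': every edge joins vertices whose distances from a fixed vertex x differ by exactly 1, except for edges between two vertices both at distance m from x. Equivalently, O_{m+1} contains no odd cycle of length less than 2m+1. -/
namespace OddAux

open SimpleGraph Finset

variable {Ω : Type*} [DecidableEq Ω] [Fintype Ω] {m : ℕ}

lemma inter_card_le (x y : {s : Finset Ω // s.card = m}) : (x.1 ∩ y.1).card ≤ m := by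
  calc (x.1 ∩ y.1).card ≤ x.1.card := Finset.card_le_card Finset.inter_subset_left
    _ = m := x.2

lemma adj_inter (hΩ : Fintype.card Ω = 2 * m + 1)
    (x y z : {s : Finset Ω // s.card = m}) (h : (oddGraph Ω m).Adj y z) :
    m ≤ (x.1 ∩ y.1).card + (x.1 ∩ z.1).card + 1 ∧
      (x.1 ∩ y.1).card + (x.1 ∩ z.1).card ≤ m := by
  obtain ⟨hne, hd⟩ := h
  have hdisj : Disjoint (x.1 ∩ y.1) (x.1 ∩ z.1) :=
    (hd.mono Finset.inter_subset_right Finset.inter_subset_right)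
  have hU : (x.1 ∩ y.1 ∪ x.1 ∩ z.1) = x.1 ∩ (y.1 ∪ z.1) :=
    (Finset.inter_union_distrib_left _ _ _).symm
  have hcardU : (x.1 ∩ (y.1 ∪ z.1)).card = (x.1 ∩ y.1).card + (x.1 ∩ z.1).card := by
    rw [← hU, Finset.card_union_of_disjoint hdisj]
  constructor
  · -- lower bound
    have h1 : (x.1 ∩ (y.1 ∪ z.1)).card + (x.1 \ (y.1 ∪ z.1)).card = x.1.card :=
      Finset.card_inter_add_card_sdiff _ _
    have h2 : x.1 \ (y.1 ∪ z.1) ⊆ (y.1 ∪ z.1)ᶜ := by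
      intro a ha
      simp only [Finset.mem_sdiff] at ha
      simpa [Finset.mem_compl] using ha.2
    have h3 : ((y.1 ∪ z.1)ᶜ).card = Fintype.card Ω - (y.1 ∪ z.1).card :=
      Finset.card_compl _
    have h4 : (y.1 ∪ z.1).card = 2 * m := by
      rw [Finset.card_union_of_disjoint hd, y.2, z.2]; ring
    have h5 := Finset.card_le_card h2
    have hx := x.2
    omega
  · have : x.1 ∩ y.1 ∪ x.1 ∩ z.1 ⊆ x.1 :=
      Finset.union_subset Finset.inter_subset_left Finset.inter_subset_left
    have := Finset.card_le_card this
    rw [Finset.card_union_of_disjoint hdisj] at this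
    have hx := x.2
    omega

end OddAux
namespace OddAux

open SimpleGraph Finset

variable {Ω : Type*} [DecidableEq Ω] [Fintype Ω] {m : ℕ}

lemma exists_neighbor (hm : 1 ≤ m) (hΩ : Fintype.card Ω = 2 * m + 1)
    (x y : {s : Finset Ω // s.card = m}) (c : ℕ)
    (h1 : m ≤ (x.1 ∩ y.1).card + c + 1) (h2 : c + (x.1 ∩ y.1).card ≤ m) :
    ∃ z : {s : Finset Ω // s.card = m}, (oddGraph Ω m).Adj y z ∧ (x.1 ∩ z.1).card = c := by
  set j := (x.1 ∩ y.1).card with hj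
  have hxy : (x.1 \ y.1).card = m - j := by
    have := Finset.card_inter_add_card_sdiff x.1 y.1
    have hx := x.2; omega
  obtain ⟨A, hA, hAcard⟩ := Finset.exists_subset_card_eq (s := x.1 \ y.1) (n := c) (by omega)
  -- S = yᶜ \ x
  have hycompl : (y.1ᶜ).card = m + 1 := by
    rw [Finset.card_compl, y.2, hΩ]; omega
  have hSsub : x.1 \ y.1 ⊆ y.1ᶜ := by
    intro a ha; simp only [Finset.mem_sdiff] at ha; simpa using ha.2
  have hS : (y.1ᶜ \ x.1).card = j + 1 := by
    have : y.1ᶜ ∩ x.1 = x.1 \ y.1 := by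
      ext a; simp [Finset.mem_sdiff, Finset.mem_compl, and_comm]
    have h' := Finset.card_sdiff_add_card_inter (y.1ᶜ) x.1
    rw [this, hxy] at h'
    omega
  obtain ⟨B, hB, hBcard⟩ := Finset.exists_subset_card_eq (s := y.1ᶜ \ x.1) (n := m - c) (by omega)
  have hABdisj : Disjoint A B := by
    refine Finset.disjoint_left.2 fun a haA haB => ?_
    have := hA haA
    have := hB haB
    simp only [Finset.mem_sdiff] at *
    tauto
  have hzcard : (A ∪ B).card = m := by
    rw [Finset.card_union_of_disjoint hABdisj, hAcard, hBcard]; omega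
  have hdisjyz : Disjoint y.1 (A ∪ B) := by
    refine Finset.disjoint_left.2 fun a ha hab => ?_
    rcases Finset.mem_union.1 hab with h' | h'
    · have := hA h'; simp only [Finset.mem_sdiff] at this; exact this.2 ha
    · have := hB h'; simp only [Finset.mem_sdiff, Finset.mem_compl] at this; exact this.1 ha
  refine ⟨⟨A ∪ B, hzcard⟩, ⟨?_, hdisjyz⟩, ?_⟩
  · -- y ≠ z
    intro hyz
    have hv : y.1 = A ∪ B := congrArg Subtype.val hyz
    rw [← hv] at hdisjyz
    have he : y.1 = ∅ := disjoint_self.1 hdisjyz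
    have hc := y.2
    rw [he, Finset.card_empty] at hc
    omega
  · -- intersection card
    have : x.1 ∩ (A ∪ B) = A := by
      rw [Finset.inter_union_distrib_left]
      have h1 : x.1 ∩ A = A := Finset.inter_eq_right.2 (hA.trans Finset.sdiff_subset)
      have h2 : x.1 ∩ B = ∅ := by
        refine Finset.eq_empty_of_forall_notMem fun a ha => ?_
        simp only [Finset.mem_inter] at ha
        have := hB ha.2
        simp only [Finset.mem_sdiff] at this
        exact this.2 ha.1
      rw [h1, h2, Finset.union_empty]
    rw [this, hAcard]

end OddAux
namespace OddAux

open SimpleGraph Finset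

variable {Ω : Type*} [DecidableEq Ω] [Fintype Ω] {m : ℕ}

lemma walk_bound (hm : 1 ≤ m) (hΩ : Fintype.card Ω = 2 * m + 1)
    (x : {s : Finset Ω // s.card = m}) :
    ∀ {y : {s : Finset Ω // s.card = m}} (w : (oddGraph Ω m).Walk y x),
      (Even w.length → 2 * m ≤ 2 * (x.1 ∩ y.1).card + w.length) ∧
      (Odd w.length → 2 * (x.1 ∩ y.1).card + 1 ≤ w.length) := by
  intro y w
  clear hm
  induction w with
  | nil =>
    rename_i u
    constructor
    · intro _
      have h1 : u.1 ∩ u.1 = u.1 := Finset.inter_self _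
      rw [h1, u.2]
      simp
    · intro h
      simp [Nat.odd_iff] at h
  | @cons a b c h p ih =>
    have hadj := adj_inter hΩ c a b h
    rcases Nat.even_or_odd p.length with he | ho
    · have hb := ih.1 he
      have h0 := Nat.even_iff.1 he
      constructor
      · intro h'
        simp only [SimpleGraph.Walk.length_cons] at h'
        rw [Nat.even_iff] at h'
        omega
      · intro _
        simp only [SimpleGraph.Walk.length_cons]
        omega
    · have hb := ih.2 ho
      have h0 := Nat.odd_iff.1 ho
      constructor
      · intro _
        simp only [SimpleGraph.Walk.length_cons]
        omega
      · intro h'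
        simp only [SimpleGraph.Walk.length_cons] at h'
        rw [Nat.odd_iff] at h'
        omega

lemma exists_walk (hm : 1 ≤ m) (hΩ : Fintype.card Ω = 2 * m + 1)
    (x : {s : Finset Ω // s.card = m}) :
    ∀ (n : ℕ) (y : {s : Finset Ω // s.card = m}),
      min (2 * (m - (x.1 ∩ y.1).card)) (2 * (x.1 ∩ y.1).card + 1) ≤ n →
      ∃ w : (oddGraph Ω m).Walk x y, w.length ≤ n := by
  intro n
  induction n with
  | zero =>
    intro y hy
    have hjle := inter_card_le x y
    have hj : (x.1 ∩ y.1).card = m := by omega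
    have hxy : x = y := by
      have h1 : x.1 ∩ y.1 = y.1 :=
        Finset.eq_of_subset_of_card_le Finset.inter_subset_right (by rw [hj, y.2])
      have h2 : x.1 ∩ y.1 = x.1 :=
        Finset.eq_of_subset_of_card_le Finset.inter_subset_left (by rw [hj, x.2])
      exact Subtype.ext (h2.symm.trans h1)
    subst hxy
    exact ⟨SimpleGraph.Walk.nil, by simp⟩
  | succ n ih =>
    intro y hy
    by_cases hle : min (2 * (m - (x.1 ∩ y.1).card)) (2 * (x.1 ∩ y.1).card + 1) ≤ n
    · obtain ⟨w, hw⟩ := ih y hle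
      exact ⟨w, by omega⟩
    · set j := (x.1 ∩ y.1).card with hjdef
      have hjle := inter_card_le x y
      have hmin : min (2 * (m - j)) (2 * j + 1) = n + 1 := by omega
      rcases le_or_gt (2 * (m - j)) (2 * j + 1) with hc | hc
      · -- min = 2(m-j), choose c = m - j - 1
        have hjlt : j < m := by omega
        obtain ⟨z, hadj, hzc⟩ := exists_neighbor hm hΩ x y (m - j - 1) (by omega) (by omega)
        have hz2 : min (2 * (m - (x.1 ∩ z.1).card)) (2 * (x.1 ∩ z.1).card + 1) ≤ n := by
          rw [hzc]; omega
        obtain ⟨w, hw⟩ := ih z hz2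
        exact ⟨w.concat hadj.symm, by rw [SimpleGraph.Walk.length_concat]; omega⟩
      · -- min = 2j+1, choose c = m - j
        obtain ⟨z, hadj, hzc⟩ := exists_neighbor hm hΩ x y (m - j) (by omega) (by omega)
        have hz2 : min (2 * (m - (x.1 ∩ z.1).card)) (2 * (x.1 ∩ z.1).card + 1) ≤ n := by
          rw [hzc]; omega
        obtain ⟨w, hw⟩ := ih z hz2
        exact ⟨w.concat hadj.symm, by rw [SimpleGraph.Walk.length_concat]; omega⟩

lemma dist_le_m (hm : 1 ≤ m) (hΩ : Fintype.card Ω = 2 * m + 1)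
    (x y : {s : Finset Ω // s.card = m}) : (oddGraph Ω m).dist x y ≤ m := by
  have hjle := inter_card_le x y
  obtain ⟨w, hw⟩ := exists_walk hm hΩ x m y (by omega)
  exact le_trans (SimpleGraph.dist_le w) hw

lemma reachable (hm : 1 ≤ m) (hΩ : Fintype.card Ω = 2 * m + 1)
    (x y : {s : Finset Ω // s.card = m}) : (oddGraph Ω m).Reachable x y := by
  have hjle := inter_card_le x y
  obtain ⟨w, _⟩ := exists_walk hm hΩ x m y (by omega)
  exact ⟨w⟩

end OddAux
namespace OddAux

open SimpleGraph Finset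

variable {Ω : Type*} [DecidableEq Ω] [Fintype Ω] {m : ℕ}

lemma key (hm : 1 ≤ m) (hΩ : Fintype.card Ω = 2 * m + 1)
    (x y z : {s : Finset Ω // s.card = m}) (h : (oddGraph Ω m).Adj y z) :
    (oddGraph Ω m).dist x z = (oddGraph Ω m).dist x y + 1 ∨
    (oddGraph Ω m).dist x y = (oddGraph Ω m).dist x z + 1 ∨
    ((oddGraph Ω m).dist x y = m ∧ (oddGraph Ω m).dist x z = m) := by
  obtain ⟨wy, hwy⟩ := (reachable hm hΩ x y).exists_walk_length_eq_dist
  obtain ⟨wz, hwz⟩ := (reachable hm hΩ x z).exists_walk_length_eq_dist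
  have h1 : (oddGraph Ω m).dist x z ≤ (oddGraph Ω m).dist x y + 1 := by
    have := SimpleGraph.dist_le (wy.concat h)
    rwa [SimpleGraph.Walk.length_concat, hwy] at this
  have h2 : (oddGraph Ω m).dist x y ≤ (oddGraph Ω m).dist x z + 1 := by
    have := SimpleGraph.dist_le (wz.concat h.symm)
    rwa [SimpleGraph.Walk.length_concat, hwz] at this
  by_cases heq : (oddGraph Ω m).dist x y = (oddGraph Ω m).dist x z
  · right; right
    set d := (oddGraph Ω m).dist x y with hd
    have hdm : d ≤ m := dist_le_m hm hΩ x y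
    have hby := walk_bound hm hΩ x wy.reverse
    have hbz := walk_bound hm hΩ x wz.reverse
    rw [SimpleGraph.Walk.length_reverse] at hby hbz
    have hadj := adj_inter hΩ x y z h
    rcases Nat.even_or_odd d with hp | hp
    · have e1 := hby.1 (by rwa [hwy])
      have e2 := hbz.1 (by rw [hwz, ← heq]; exact hp)
      rw [hwy] at e1
      rw [hwz] at e2
      have h0 := Nat.even_iff.1 hp
      constructor <;> omega
    · have e1 := hby.2 (by rwa [hwy])
      have e2 := hbz.2 (by rw [hwz, ← heq]; exact hp)
      rw [hwy] at e1
      rw [hwz] at e2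
      have h0 := Nat.odd_iff.1 hp
      constructor <;> omega
  · omega

lemma parity (hm : 1 ≤ m) (hΩ : Fintype.card Ω = 2 * m + 1)
    (v : {s : Finset Ω // s.card = m}) :
    ∀ {a b : {s : Finset Ω // s.card = m}} (w : (oddGraph Ω m).Walk a b),
      (∀ p ∈ w.support, (oddGraph Ω m).dist v p ≠ m) →
      (w.length + (oddGraph Ω m).dist v a + (oddGraph Ω m).dist v b) % 2 = 0 := by
  intro a b w
  induction w with
  | nil =>
    intro _
    simp only [SimpleGraph.Walk.length_nil]
    omega
  | @cons a c b h p ih =>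
    intro hsup
    have ha : (oddGraph Ω m).dist v a ≠ m := hsup a (by simp)
    have hc : (oddGraph Ω m).dist v c ≠ m := hsup c (by simp)
    have hrest : ∀ q ∈ p.support, (oddGraph Ω m).dist v q ≠ m := by
      intro q hq
      exact hsup q (by simp [hq])
    have hih := ih hrest
    rcases key hm hΩ v a c h with h' | h' | h'
    · simp only [SimpleGraph.Walk.length_cons]; omega
    · simp only [SimpleGraph.Walk.length_cons]; omega
    · exact absurd h'.1 ha

end OddAux



/-- `O_{m+1}` is almost bipartite: every edge joins vertices whose distances from a
fixed vertex `x` differ by exactly one, except for edges between two vertices both at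
distance `m` from `x`; equivalently, `O_{m+1}` has no odd cycle of length `< 2m+1`. -/
theorem stmt10 (Ω : Type*) [DecidableEq Ω] [Fintype Ω] (m : ℕ) (hm : 1 ≤ m)
    (hΩ : Fintype.card Ω = 2 * m + 1) (x : {s : Finset Ω // s.card = m}) :
    (∀ y z : {s : Finset Ω // s.card = m}, (oddGraph Ω m).Adj y z →
      ((oddGraph Ω m).dist x z = (oddGraph Ω m).dist x y + 1 ∨
       (oddGraph Ω m).dist x y = (oddGraph Ω m).dist x z + 1 ∨
       ((oddGraph Ω m).dist x y = m ∧ (oddGraph Ω m).dist x z = m))) ∧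
    (∀ (v : {s : Finset Ω // s.card = m}) (c : (oddGraph Ω m).Walk v v),
      c.IsCycle → Odd c.length → 2 * m + 1 ≤ c.length) := by
  constructor
  · exact fun y z h => OddAux.key hm hΩ x y z h
  · intro v c _hcyc hodd
    have hodd' := Nat.odd_iff.1 hodd
    by_cases hall : ∀ p ∈ c.support, (oddGraph Ω m).dist v p ≠ m
    · have := OddAux.parity hm hΩ v c hall
      simp only [SimpleGraph.dist_self] at this
      omega
    · push_neg at hall
      obtain ⟨p, hp, hpd⟩ := hall
      have hsplit := SimpleGraph.Walk.take_spec c hp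
      have hlen : c.length = (c.takeUntil p hp).length + (c.dropUntil p hp).length := by
        conv_lhs => rw [← hsplit]
        rw [SimpleGraph.Walk.length_append]
      have h1 : m ≤ (c.takeUntil p hp).length := by
        have := SimpleGraph.dist_le (c.takeUntil p hp)
        omega
      have h2 : m ≤ (c.dropUntil p hp).length := by
        have := SimpleGraph.dist_le (c.dropUntil p hp).reverse
        rw [SimpleGraph.Walk.length_reverse] at this
        omega
      omega
end

section
/- For every positive integer m, Σ_{i=0}^{m} Σ_{j=0}^{m} (min(m−i, m−j) − max(0, m−i−j) + 1)·(min(i,j) − max(0, i+j−m−1) + 1) = C(m+4, 4). -/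
open Finset


lemma tri_rec (f g : ℕ → ℤ) (hfg : ∀ t, f (t+1) = g t) (n : ℕ) :
    ∑ i ∈ range (n+3), ∑ j ∈ range (n+3-i), f (min i j)
      = (2*(n:ℤ)+5) * f 0 + ∑ i ∈ range (n+1), ∑ j ∈ range (n+1-i), g (min i j) := by
  rw [Finset.sum_range_succ' (fun i => ∑ j ∈ range (n+3-i), f (min i j)) (n+2)]
  simp only [Nat.succ_sub_succ_eq_sub]
  have h0 : ∑ j ∈ range (n+3-0), f (min 0 j) = (n+3 : ℤ) * f 0 := by
    simp [Finset.sum_const, Nat.zero_min]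
  have h1 : ∀ i ∈ range (n+2), ∑ j ∈ range (n+2-i), f (min (i+1) j)
      = (∑ j ∈ range (n+1-i), g (min i j)) + f 0 := by
    intro i hi
    have hi' : i < n+2 := Finset.mem_range.mp hi
    rw [show n+2-i = (n+1-i)+1 from by omega,
      Finset.sum_range_succ' (fun j => f (min (i+1) j)) (n+1-i)]
    congr 1
    refine Finset.sum_congr rfl fun j hj => ?_
    rw [Nat.succ_min_succ, hfg]
  rw [Finset.sum_congr rfl h1, Finset.sum_add_distrib, Finset.sum_const, card_range, h0,
    Finset.sum_range_succ]
  simp only [Nat.sub_self, Finset.range_zero, Finset.sum_empty, add_zero]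
  ring

/-- triangular sum of `(min i j + c)^2` -/
def auxA (n : ℕ) (c : ℤ) : ℤ :=
  ∑ i ∈ range (n+1), ∑ j ∈ range (n+1-i), ((min i j : ℕ) + c)^2

/-- triangular sum of `(min i j + c) * (min i j + c + 1)` -/
def auxB (n : ℕ) (c : ℤ) : ℤ :=
  ∑ i ∈ range (n+1), ∑ j ∈ range (n+1-i), ((min i j : ℕ) + c) * ((min i j : ℕ) + c + 1)

def Qp (m c : ℤ) : ℤ :=
  m^4 + 2*m^3 + 8*m^3*c - m^2 + 12*m^2*c + 24*m^2*c^2 - 2*m + 4*m*c + 48*m*c^2 + 24*c^2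

lemma recA (n : ℕ) (c : ℤ) : auxA (n+2) c = (2*(n:ℤ)+5)*c^2 + auxA n (c+1) := by
  have := tri_rec (fun t => ((t:ℤ) + c)^2) (fun t => ((t:ℤ) + (c+1))^2)
    (fun t => by push_cast; ring) n
  simpa [auxA, show n+2+1 = n+3 from rfl] using this

lemma recB (n : ℕ) (c : ℤ) : auxB (n+2) c = (2*(n:ℤ)+5)*(c*(c+1)) + auxB n (c+1) := by
  have := tri_rec (fun t => ((t:ℤ) + c) * ((t:ℤ) + c + 1))
    (fun t => ((t:ℤ) + (c+1)) * ((t:ℤ) + (c+1) + 1)) (fun t => by push_cast; ring) n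
  simpa [auxB, show n+2+1 = n+3 from rfl] using this

lemma closedForm : ∀ k : ℕ, ∀ c : ℤ, 24 * (auxA (k+1) c + auxB k c) = Qp ((k:ℤ)+1) c := by
  have key : ∀ k : ℕ, (∀ c : ℤ, 24 * (auxA (k+1) c + auxB k c) = Qp ((k:ℤ)+1) c) ∧
      (∀ c : ℤ, 24 * (auxA (k+2) c + auxB (k+1) c) = Qp ((k:ℤ)+2) c) := by
    intro k
    induction k with
    | zero =>
      constructor
      · intro c
        simp [auxA, auxB, Qp, Finset.sum_range_succ]
        ring
      · intro c
        simp [auxA, auxB, Qp, Finset.sum_range_succ]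
        ring
    | succ n ih =>
      refine ⟨ih.2, fun c => ?_⟩
      have hA := recA (n+1) c
      have hB := recB n c
      have ihc := ih.1 (c+1)
      rw [hA, hB]
      push_cast [Qp] at ihc ⊢
      linear_combination ihc
  exact fun k => (key k).1


lemma mini_reflect (n : ℕ) (F : ℕ → ℤ) :
    ∑ i ∈ range (n+1), F (n - i) = ∑ i ∈ range (n+1), F i := by
  conv_rhs => rw [← Finset.sum_range_reflect]
  refine Finset.sum_congr rfl fun i hi => ?_
  simp only [Nat.add_sub_cancel]

lemma sq_to_tri (n : ℕ) (f : ℕ → ℕ → ℤ) :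
    ∑ i ∈ range (n+1), ∑ j ∈ range (n+1), (if i + j ≤ n then f i j else 0)
      = ∑ i ∈ range (n+1), ∑ j ∈ range (n+1-i), f i j := by
  refine Finset.sum_congr rfl fun i hi => ?_
  have hi' : i < n+1 := Finset.mem_range.mp hi
  rw [← Finset.sum_filter]
  refine Finset.sum_congr ?_ fun _ _ => rfl
  ext j
  simp only [Finset.mem_filter, Finset.mem_range]
  omega

lemma sq_to_tri' (n : ℕ) (f : ℕ → ℕ → ℤ) :
    ∑ i ∈ range (n+1), ∑ j ∈ range (n+1), (if i + j < n then f i j else 0)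
      = ∑ i ∈ range (n+1), ∑ j ∈ range (n-i), f i j := by
  refine Finset.sum_congr rfl fun i hi => ?_
  have hi' : i < n+1 := Finset.mem_range.mp hi
  rw [← Finset.sum_filter]
  refine Finset.sum_congr ?_ fun _ _ => rfl
  ext j
  simp only [Finset.mem_filter, Finset.mem_range]
  omega

lemma reflect2 (n : ℕ) (h : ℕ → ℕ → ℤ) :
    ∑ i ∈ range (n+1), ∑ j ∈ range (n+1), (if n < i + j then h (n-i) (n-j) else 0)
      = ∑ i ∈ range (n+1), ∑ j ∈ range (n+1), (if i + j < n then h i j else 0) := by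
  rw [← mini_reflect n (fun i => ∑ j ∈ range (n+1), (if i + j < n then h i j else 0))]
  refine Finset.sum_congr rfl fun i hi => ?_
  rw [← mini_reflect n (fun j => if (n-i) + j < n then h (n-i) j else 0)]
  refine Finset.sum_congr rfl fun j hj => ?_
  have hi' := Finset.mem_range.mp hi
  have hj' := Finset.mem_range.mp hj
  have hc : (n < i + j) ↔ (n - i + (n - j) < n) := by omega
  rw [if_congr hc rfl rfl]

lemma pointwise (m i j : ℕ) (hi : i ≤ m) (hj : j ≤ m) :
    (min ((m : ℤ) - i) ((m : ℤ) - j) - max 0 ((m : ℤ) - i - j) + 1) *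
      (min (i : ℤ) j - max 0 ((i : ℤ) + j - m - 1) + 1)
    = (if i + j ≤ m then (((min i j : ℕ) : ℤ) + 1)^2 else 0)
      + (if m < i + j then (((min (m-i) (m-j) : ℕ) : ℤ) + 1) *
          (((min (m-i) (m-j) : ℕ) : ℤ) + 2) else 0) := by
  by_cases h : i + j ≤ m
  · rw [if_pos h, if_neg (by omega), add_zero]
    have e1 : min ((m : ℤ) - i) ((m : ℤ) - j) - max 0 ((m : ℤ) - i - j) + 1
        = ((min i j : ℕ) : ℤ) + 1 := by omega
    have e2 : min (i : ℤ) j - max 0 ((i : ℤ) + j - m - 1) + 1 = ((min i j : ℕ) : ℤ) + 1 := by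
      omega
    rw [e1, e2]; ring
  · rw [if_neg h, if_pos (by omega), zero_add]
    have e1 : min ((m : ℤ) - i) ((m : ℤ) - j) - max 0 ((m : ℤ) - i - j) + 1
        = ((min (m-i) (m-j) : ℕ) : ℤ) + 1 := by omega
    have e2 : min (i : ℤ) j - max 0 ((i : ℤ) + j - m - 1) + 1
        = ((min (m-i) (m-j) : ℕ) : ℤ) + 2 := by omega
    rw [e1, e2]

lemma chooseFour (m : ℕ) : ((m+4).choose 4 : ℤ) * 24
    = ((m:ℤ)+1)*((m:ℤ)+2)*((m:ℤ)+3)*((m:ℤ)+4) := by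
  have h := Nat.choose_mul_factorial_mul_factorial (show 4 ≤ m+4 by omega)
  have h4 : Nat.factorial 4 = 24 := rfl
  have hsub : m + 4 - 4 = m := by omega
  rw [h4, hsub] at h
  have h2 : Nat.factorial (m+4) = ((m+1)*(m+2)*(m+3)*(m+4)) * Nat.factorial m := by
    rw [show m+4 = (m+3)+1 from rfl, Nat.factorial_succ,
      show m+3 = (m+2)+1 from rfl, Nat.factorial_succ,
      show m+2 = (m+1)+1 from rfl, Nat.factorial_succ, Nat.factorial_succ]
    ring
  rw [h2] at h
  have h3 : (m+4).choose 4 * 24 = (m+1)*(m+2)*(m+3)*(m+4) :=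
    Nat.eq_of_mul_eq_mul_right (Nat.factorial_pos m) (by linarith [h])
  have := congrArg (Nat.cast : ℕ → ℤ) h3
  push_cast at this
  linarith [this]

theorem stmt12 (m : ℕ) (hm : 1 ≤ m) :
    ∑ i ∈ Finset.range (m + 1), ∑ j ∈ Finset.range (m + 1),
      ((min ((m : ℤ) - i) ((m : ℤ) - j) - max 0 ((m : ℤ) - i - j) + 1) *
       (min (i : ℤ) j - max 0 ((i : ℤ) + j - m - 1) + 1)) =
      ((m + 4).choose 4 : ℤ) := by
  obtain ⟨k, rfl⟩ : ∃ k, m = k + 1 := ⟨m - 1, by omega⟩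
  set m := k + 1 with hmk
  have hsum : ∑ i ∈ Finset.range (m + 1), ∑ j ∈ Finset.range (m + 1),
      ((min ((m : ℤ) - i) ((m : ℤ) - j) - max 0 ((m : ℤ) - i - j) + 1) *
       (min (i : ℤ) j - max 0 ((i : ℤ) + j - m - 1) + 1))
      = auxA m 1 + auxB k 1 := by
    have hpt : ∀ i ∈ Finset.range (m+1), ∀ j ∈ Finset.range (m+1),
        ((min ((m : ℤ) - i) ((m : ℤ) - j) - max 0 ((m : ℤ) - i - j) + 1) *
         (min (i : ℤ) j - max 0 ((i : ℤ) + j - m - 1) + 1))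
        = (if i + j ≤ m then (((min i j : ℕ) : ℤ) + 1)^2 else 0)
          + (if m < i + j then (((min (m-i) (m-j) : ℕ) : ℤ) + 1) *
              (((min (m-i) (m-j) : ℕ) : ℤ) + 2) else 0) := by
      intro i hi j hj
      exact pointwise m i j (by simpa [Nat.lt_succ_iff] using Finset.mem_range.mp hi)
        (by simpa [Nat.lt_succ_iff] using Finset.mem_range.mp hj)
    rw [Finset.sum_congr rfl fun i hi => Finset.sum_congr rfl fun j hj => hpt i hi j hj]
    simp only [Finset.sum_add_distrib]
    congr 1
    · rw [sq_to_tri m (fun i j => (((min i j : ℕ) : ℤ) + 1)^2)]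
      rfl
    · rw [reflect2 m (fun a b => (((min a b : ℕ) : ℤ) + 1) * (((min a b : ℕ) : ℤ) + 2)),
        sq_to_tri' m (fun a b => (((min a b : ℕ) : ℤ) + 1) * (((min a b : ℕ) : ℤ) + 2))]
      rw [show m = k + 1 from rfl, Finset.sum_range_succ]
      simp only [Nat.add_sub_cancel_left, Nat.sub_self, Finset.range_zero,
        Finset.sum_empty, add_zero, auxB]
      exact Finset.sum_congr rfl fun a _ => Finset.sum_congr rfl fun b _ => by push_cast; ring
  rw [hsum]
  have hcf := closedForm k 1
  have hc4 := chooseFour m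
  have h24 : (24:ℤ) ≠ 0 := by norm_num
  apply mul_left_cancel₀ h24
  rw [hcf]
  push_cast [Qp] at *
  rw [hmk] at hc4 ⊢
  push_cast at hc4
  linarith [hc4]
end

section
/- Let V be a finite set of cardinality v and 0 ≤ i, j ≤ v. The span over ℂ of the matrices {H_{i,j}^l(v) : 0 ≤ l ≤ min(i,j)} has dimension min(i,j) − max(0, i+j−v) + 1. -/
open Finset

lemma inter_lb {V : Type*} [DecidableEq V] [Fintype V] (y z : Finset V) :
    y.card + z.card ≤ (y ∩ z).card + Fintype.card V := by
  have h1 := Finset.card_union_add_card_inter y z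
  have h2 : (y ∪ z).card ≤ Fintype.card V := Finset.card_le_univ _
  omega

lemma exists_pair {V : Type*} [DecidableEq V] [Fintype V] {i j l : ℕ}
    (hl1 : i + j ≤ l + Fintype.card V) (hli : l ≤ i) (hlj : l ≤ j)
    (hi : i ≤ Fintype.card V) :
    ∃ y z : Finset V, y.card = i ∧ z.card = j ∧ (y ∩ z).card = l := by
  have hiu : i ≤ (Finset.univ : Finset V).card := by
    rwa [Finset.card_univ]
  obtain ⟨y, -, hy⟩ := Finset.exists_subset_card_eq hiu
  obtain ⟨a, ha, hac⟩ := Finset.exists_subset_card_eq (show l ≤ y.card by omega)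
  have hyc : (yᶜ).card = Fintype.card V - i := by
    rw [Finset.card_compl, hy]
  obtain ⟨b, hb, hbc⟩ := Finset.exists_subset_card_eq
    (show j - l ≤ (yᶜ).card by omega)
  have hdisj : Disjoint a b :=
    disjoint_compl_right.mono ha hb
  have hyb : Disjoint y b := disjoint_compl_right.mono_right hb
  refine ⟨y, a ∪ b, hy, ?_, ?_⟩
  · rw [Finset.card_union_of_disjoint hdisj, hac, hbc]; omega
  · rw [Finset.inter_union_distrib_left,
      Finset.inter_eq_right.mpr ha, Finset.disjoint_iff_inter_eq_empty.mp hyb,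
      Finset.union_empty, hac]

/-- The span of `{H_{i,j}^l(v) : 0 ≤ l ≤ min(i,j)}` has dimension
`min(i,j) − max(0, i+j−v) + 1`. -/
theorem stmt13 (V : Type*) [DecidableEq V] [Fintype V] (v i j : ℕ)
    (hv : Fintype.card V = v) (hi : i ≤ v) (hj : j ≤ v) :
    Module.finrank ℂ
      (Submodule.span ℂ
        {M : Matrix {y : Finset V // y.card = i} {z : Finset V // z.card = j} ℂ |
          ∃ l : ℕ, l ≤ min i j ∧ M = interMat V i j l}) =
      min i j - (i + j - v) + 1 := by
  set S := {M : Matrix {y : Finset V // y.card = i} {z : Finset V // z.card = j} ℂ |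
          ∃ l : ℕ, l ≤ min i j ∧ M = interMat V i j l} with hS
  set f : (Finset.Icc (i + j - v) (min i j)) →
      Matrix {y : Finset V // y.card = i} {z : Finset V // z.card = j} ℂ :=
    fun l => interMat V i j (l.1 : ℤ) with hfdef
  -- zero matrices for small l
  have hzero : ∀ l : ℕ, l < i + j - v → interMat V i j (l : ℤ) = 0 := by
    intro l hl
    ext y z
    have := inter_lb y.1 z.1
    rw [y.2, z.2, hv] at this
    simp only [interMat, Matrix.of_apply, Matrix.zero_apply, ite_eq_right_iff]
    intro h
    exfalso
    have : (y.1 ∩ z.1).card = l := by exact_mod_cast h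
    omega
  -- span equality
  have hspan : Submodule.span ℂ S = Submodule.span ℂ (Set.range f) := by
    apply le_antisymm
    · rw [Submodule.span_le]
      rintro M ⟨l, hl, rfl⟩
      by_cases h : i + j - v ≤ l
      · exact Submodule.subset_span ⟨⟨l, Finset.mem_Icc.mpr ⟨h, hl⟩⟩, rfl⟩
      · rw [hzero l (by omega)]
        exact Submodule.zero_mem _
    · rw [Submodule.span_le]
      rintro M ⟨l, rfl⟩
      exact Submodule.subset_span ⟨l.1, (Finset.mem_Icc.mp l.2).2, rfl⟩
  -- linear independence
  have hli : LinearIndependent ℂ f := by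
    rw [linearIndependent_iff']
    intro s g hsum l₀ hl₀
    obtain ⟨h1, h2⟩ := Finset.mem_Icc.mp l₀.2
    obtain ⟨y, z, hy, hz, hyz⟩ := exists_pair (V := V)
      (i := i) (j := j) (l := l₀.1) (by rw [hv]; omega) (by omega) (by omega) (by rw [hv]; exact hi)
    have := congrFun (congrFun hsum ⟨y, hy⟩) ⟨z, hz⟩
    simp only [Matrix.sum_apply, Matrix.smul_apply, Matrix.zero_apply, hfdef,
      interMat, Matrix.of_apply, smul_eq_mul] at this
    rw [Finset.sum_congr rfl (fun l _ => ?_)] at this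
    · rwa [Finset.sum_ite_eq' s l₀ g, if_pos hl₀] at this
    · show g l * _ = if l = l₀ then g l else 0
      by_cases h : l = l₀
      · subst h
        rw [if_pos rfl, if_pos (by exact_mod_cast hyz), mul_one]
      · rw [if_neg h, if_neg, mul_zero]
        intro hc
        apply h
        have : (y ∩ z).card = l.1 := by exact_mod_cast hc
        exact Subtype.ext (by omega)
  rw [hspan, finrank_span_eq_card hli]
  simp only [Fintype.card_coe, Nat.card_Icc]
  omega
end

section
/- Let Ω have cardinality 2m+1 and let x, y be m-subsets with |x ∩ y| = i, 0 ≤ i ≤ ⌈m/2⌉ − 1. Then the set {z : z an m-subset, z ∩ y = ∅, |x ∩ z| = m − i} is nonempty; i.e., y has a neighbor z in O_{m+1} with |x ∩ z| = m − i. -/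
/-- If `|x ∩ y| = i` with `0 ≤ i ≤ ⌈m/2⌉ − 1`, then `y` has a neighbor `z` in the Odd
graph (an `m`-subset disjoint from `y`) with `|x ∩ z| = m − i`. -/
theorem stmt18 (Ω : Type*) [DecidableEq Ω] [Fintype Ω] (m : ℕ) (hm : 1 ≤ m)
    (hΩ : Fintype.card Ω = 2 * m + 1) (x y : Finset Ω)
    (hx : x.card = m) (hy : y.card = m) (i : ℕ) (hi : i + 1 ≤ (m + 1) / 2)
    (hxy : (x ∩ y).card = i) :
    ∃ z : Finset Ω, z.card = m ∧ Disjoint z y ∧ (x ∩ z).card = m - i := by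
  have him : i ≤ m := by omega
  have hxd : (x \ y).card = m - i := by
    have := Finset.card_sdiff_add_card_inter x y
    omega
  have hyc : yᶜ.card = m + 1 := by
    rw [Finset.card_compl, hy, hΩ]; omega
  have hsub : x \ y ⊆ yᶜ := fun a ha => by
    simp only [Finset.mem_sdiff] at ha
    simp [ha.2]
  have hcard : (yᶜ \ (x \ y)).card = i + 1 := by
    rw [Finset.card_sdiff_of_subset hsub, hyc, hxd]; omega
  obtain ⟨S, hS, hScard⟩ := Finset.exists_subset_card_eq (s := yᶜ \ (x \ y)) (n := i) (by omega)
  refine ⟨(x \ y) ∪ S, ?_, ?_, ?_⟩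
  · have hdisj : Disjoint (x \ y) S := by
      refine Finset.disjoint_left.2 fun a ha haS => ?_
      have := hS haS
      simp only [Finset.mem_sdiff] at this
      exact this.2 (Finset.mem_sdiff.1 ha)
    rw [Finset.card_union_of_disjoint hdisj, hxd, hScard]; omega
  · refine Finset.disjoint_left.2 fun a ha hay => ?_
    rcases Finset.mem_union.1 ha with h | h
    · exact (Finset.mem_sdiff.1 h).2 hay
    · exact (Finset.mem_compl.1 (Finset.mem_sdiff.1 (hS h)).1) hay
  · have : x ∩ ((x \ y) ∪ S) = x \ y := by
      ext a
      simp only [Finset.mem_inter, Finset.mem_union, Finset.mem_sdiff]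
      constructor
      · rintro ⟨hax, h | haS⟩
        · exact h
        · have := Finset.mem_sdiff.1 (hS haS)
          rcases Finset.mem_sdiff.1 (hS haS) with ⟨_, h2⟩
          exact absurd (by simp [Finset.mem_sdiff, hax]; intro hy'; exact (Finset.mem_compl.1 (Finset.mem_sdiff.1 (hS haS)).1) hy') h2
      · rintro ⟨hax, hay⟩
        exact ⟨hax, Or.inl ⟨hax, hay⟩⟩
    rw [this, hxd]
end

section
/- For a finite set V of cardinality v and 0 ≤ i, j, k ≤ v, the product of spans Span{H_{i,j}^l(v) : l} · Span{H_{j,k}^s(v) : s} is contained in Span{H_{i,k}^g(v) : g}; i.e., the ℂ-span of all intersection matrices between fixed subset-size levels is closed under matrix multiplication through an intermediate level. -/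
open Finset

section Perm

variable {α : Type*} [DecidableEq α] [Fintype α]

lemma exists_perm_mem_iff (s t : Finset α) (h : s.card = t.card) :
    ∃ σ : Equiv.Perm α, ∀ x, x ∈ s ↔ σ x ∈ t := by
  have hc : sᶜ.card = tᶜ.card := by simp [Finset.card_compl, h]
  let e : {x // x ∈ s} ≃ {x // x ∈ t} := Finset.equivOfCardEq h
  let e' : {x // ¬ x ∈ s} ≃ {x // ¬ x ∈ t} :=
    ((Equiv.subtypeEquivRight (fun x => (Finset.mem_compl (a := x) (s := s)).symm)).trans
      (Finset.equivOfCardEq hc)).trans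
      (Equiv.subtypeEquivRight (fun x => Finset.mem_compl (a := x) (s := t)))
  refine ⟨Equiv.subtypeCongr e e', fun x => ?_⟩
  by_cases hx : x ∈ s
  · have h1 : Equiv.subtypeCongr e e' x = ↑(e ⟨x, hx⟩) := by
      simp [Equiv.subtypeCongr, hx]
    simp [hx, h1, (e ⟨x, hx⟩).2]
  · have h1 : Equiv.subtypeCongr e e' x = ↑(e' ⟨x, hx⟩) := by
      simp [Equiv.subtypeCongr, hx]
    simp [hx, h1, (e' ⟨x, hx⟩).2]

lemma image_eq_of_mem_iff {σ : Equiv.Perm α} {s t : Finset α} (hc : s.card = t.card)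
    (hst : ∀ x, x ∈ s ↔ σ x ∈ t) : s.image σ = t := by
  apply Finset.eq_of_subset_of_card_le
  · intro a ha
    obtain ⟨x, hx, rfl⟩ := Finset.mem_image.1 ha
    exact (hst x).1 hx
  · rw [Finset.card_image_of_injective _ σ.injective, hc]

lemma exists_perm_pair (y z y' z' : Finset α) (hy : y.card = y'.card) (hz : z.card = z'.card)
    (hyz : (y ∩ z).card = (y' ∩ z').card) :
    ∃ σ : Equiv.Perm α, (∀ x, x ∈ y ↔ σ x ∈ y') ∧ (∀ x, x ∈ z ↔ σ x ∈ z') := by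
  obtain ⟨σ1, h1⟩ := exists_perm_mem_iff y y' hy
  set u : Finset α := z.image σ1 with hu
  have hmemu : ∀ x, x ∈ z ↔ σ1 x ∈ u := fun x =>
    ⟨fun hx => Finset.mem_image_of_mem _ hx, fun hx => by
      obtain ⟨a, ha, hax⟩ := Finset.mem_image.1 hx
      rwa [← σ1.injective hax]⟩
  have hy' : y.image σ1 = y' := image_eq_of_mem_iff hy h1
  have hcu : u.card = z.card := Finset.card_image_of_injective _ σ1.injective
  have hiu : (u ∩ y').card = (z' ∩ y').card := by
    have h2 : u ∩ y' = (z ∩ y).image σ1 := by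
      rw [hu, ← hy', ← Finset.image_inter _ _ σ1.injective]
    rw [h2, Finset.card_image_of_injective _ σ1.injective, Finset.inter_comm,
      Finset.inter_comm z', hyz]
  have hdu : (u \ y').card = (z' \ y').card := by
    have a1 := Finset.card_sdiff_add_card_inter u y'
    have a2 := Finset.card_sdiff_add_card_inter z' y'
    omega
  have hsub1 : (u.subtype (· ∈ y')).card = (z'.subtype (· ∈ y')).card := by
    rw [← Finset.card_map (Function.Embedding.subtype _), Finset.subtype_map,
      ← Finset.card_map (f := Function.Embedding.subtype _) (s := z'.subtype (· ∈ y')),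
      Finset.subtype_map, Finset.filter_mem_eq_inter, Finset.filter_mem_eq_inter]
    exact hiu
  have hsub2 : (u.subtype (· ∉ y')).card = (z'.subtype (· ∉ y')).card := by
    rw [← Finset.card_map (Function.Embedding.subtype _), Finset.subtype_map,
      ← Finset.card_map (f := Function.Embedding.subtype _) (s := z'.subtype (· ∉ y')),
      Finset.subtype_map, ← Finset.sdiff_eq_filter, ← Finset.sdiff_eq_filter]
    exact hdu
  obtain ⟨e, he⟩ := exists_perm_mem_iff _ _ hsub1
  obtain ⟨e', he'⟩ := exists_perm_mem_iff _ _ hsub2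
  let σ2 : Equiv.Perm α := Equiv.Perm.subtypeCongr e e'
  have hσ2 : ∀ a, (a ∈ y' ↔ σ2 a ∈ y') ∧ (a ∈ u ↔ σ2 a ∈ z') := by
    intro a
    by_cases ha : a ∈ y'
    · have h2 : σ2 a = ↑(e ⟨a, ha⟩) := Equiv.Perm.subtypeCongr.left_apply e e' ha
      have h3 : (↑(e ⟨a, ha⟩) : α) ∈ y' := (e ⟨a, ha⟩).2
      constructor
      · simp only [ha, h2, h3]
      · rw [h2]
        constructor
        · intro hau
          have := (he ⟨a, ha⟩).1 (Finset.mem_subtype.2 hau)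
          exact Finset.mem_subtype.1 this
        · intro hz'
          have := (he ⟨a, ha⟩).2 (Finset.mem_subtype.2 hz')
          exact Finset.mem_subtype.1 this
    · have h2 : σ2 a = ↑(e' ⟨a, ha⟩) := Equiv.Perm.subtypeCongr.right_apply e e' ha
      have h3 : (↑(e' ⟨a, ha⟩) : α) ∉ y' := (e' ⟨a, ha⟩).2
      constructor
      · simp only [ha, h2, h3]
      · rw [h2]
        constructor
        · intro hau
          have := (he' ⟨a, ha⟩).1 (Finset.mem_subtype.2 hau)
          exact Finset.mem_subtype.1 this
        · intro hz'
          have := (he' ⟨a, ha⟩).2 (Finset.mem_subtype.2 hz')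
          exact Finset.mem_subtype.1 this
  refine ⟨σ1.trans σ2, fun x => ?_, fun x => ?_⟩
  · rw [h1 x]
    exact (hσ2 (σ1 x)).1
  · rw [hmemu x]
    exact (hσ2 (σ1 x)).2

end Perm

lemma mul_entry_eq (V : Type*) [DecidableEq V] [Fintype V] (i j k : ℕ) (l s : ℤ)
    (y y' : {y : Finset V // y.card = i}) (z z' : {z : Finset V // z.card = k})
    (h : (y.1 ∩ z.1).card = (y'.1 ∩ z'.1).card) :
    (interMat V i j l * interMat V j k s) y z = (interMat V i j l * interMat V j k s) y' z' := by
  obtain ⟨σ, hσy, hσz⟩ := exists_perm_pair y.1 z.1 y'.1 z'.1 (by rw [y.2, y'.2])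
    (by rw [z.2, z'.2]) h
  have hyimg : y.1.image σ = y'.1 := image_eq_of_mem_iff (by rw [y.2, y'.2]) hσy
  have hzimg : z.1.image σ = z'.1 := image_eq_of_mem_iff (by rw [z.2, z'.2]) hσz
  simp only [Matrix.mul_apply, interMat, Matrix.of_apply]
  let eqv : {w : Finset V // w.card = j} ≃ {w : Finset V // w.card = j} :=
    { toFun := fun w => ⟨w.1.image σ, by rw [Finset.card_image_of_injective _ σ.injective, w.2]⟩
      invFun := fun w => ⟨w.1.image σ.symm,
        by rw [Finset.card_image_of_injective _ σ.symm.injective, w.2]⟩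
      left_inv := fun w => by
        apply Subtype.ext
        simp [Finset.image_image]
      right_inv := fun w => by
        apply Subtype.ext
        simp [Finset.image_image] }
  refine Fintype.sum_equiv eqv _ _ ?_
  intro w
  have h1 : y'.1 ∩ w.1.image σ = (y.1 ∩ w.1).image σ := by
    rw [← hyimg, ← Finset.image_inter _ _ σ.injective]
  have h2 : w.1.image σ ∩ z'.1 = (w.1 ∩ z.1).image σ := by
    rw [← hzimg, ← Finset.image_inter _ _ σ.injective]
  simp only [eqv, Equiv.coe_fn_mk, h1, h2, Finset.card_image_of_injective _ σ.injective]

lemma key_mem (V : Type*) [DecidableEq V] [Fintype V] (v i j k : ℕ)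
    (hv : Fintype.card V = v) (hi : i ≤ v) (l s : ℤ) :
    interMat V i j l * interMat V j k s ∈
      Submodule.span ℂ (Set.range fun g : ℤ => interMat V i k g) := by
  classical
  set c : ℤ → ℂ := fun g =>
    if h : ∃ yz : {y : Finset V // y.card = i} × {z : Finset V // z.card = k},
        ((yz.1.1 ∩ yz.2.1).card : ℤ) = g then
      (interMat V i j l * interMat V j k s) h.choose.1 h.choose.2
    else 0 with hc
  have hMN : interMat V i j l * interMat V j k s =
      ∑ g ∈ Finset.Icc (0 : ℤ) v, c g • interMat V i k g := by
    ext y z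
    rw [Matrix.sum_apply]
    simp only [Matrix.smul_apply, interMat, Matrix.of_apply, smul_eq_mul, mul_ite, mul_one,
      mul_zero]
    rw [Finset.sum_ite_eq (Finset.Icc (0 : ℤ) v) (((y.1 ∩ z.1).card : ℤ)) c]
    have hmem : ((y.1 ∩ z.1).card : ℤ) ∈ Finset.Icc (0 : ℤ) v := by
      simp only [Finset.mem_Icc]
      constructor
      · positivity
      · have h1 : (y.1 ∩ z.1).card ≤ y.1.card := Finset.card_le_card Finset.inter_subset_left
        have h2 : y.1.card = i := y.2
        exact_mod_cast le_trans (h1.trans_eq h2) hi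
    rw [if_pos hmem]
    have hex : ∃ yz : {y : Finset V // y.card = i} × {z : Finset V // z.card = k},
        ((yz.1.1 ∩ yz.2.1).card : ℤ) = ((y.1 ∩ z.1).card : ℤ) := ⟨⟨y, z⟩, rfl⟩
    rw [hc]
    simp only [dif_pos hex]
    have hspec := hex.choose_spec
    exact mul_entry_eq V i j k l s y hex.choose.1 z hex.choose.2 (by exact_mod_cast hspec.symm)
  rw [hMN]
  exact Submodule.sum_mem _ fun g _ =>
    Submodule.smul_mem _ _ (Submodule.subset_span (Set.mem_range_self g))

/-- The span of intersection matrices between fixed levels is closed under matrix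
multiplication through an intermediate level. -/
theorem stmt19 (V : Type*) [DecidableEq V] [Fintype V] (v i j k : ℕ)
    (hv : Fintype.card V = v) (hi : i ≤ v) (hj : j ≤ v) (hk : k ≤ v) :
    ∀ M ∈ Submodule.span ℂ (Set.range fun l : ℤ => interMat V i j l),
      ∀ N ∈ Submodule.span ℂ (Set.range fun s : ℤ => interMat V j k s),
        M * N ∈ Submodule.span ℂ (Set.range fun g : ℤ => interMat V i k g) := by
  intro M hM N hN
  induction hM using Submodule.span_induction with
  | mem M hMmem =>
    obtain ⟨l, rfl⟩ := hMmem
    induction hN using Submodule.span_induction with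
    | mem N hNmem =>
      obtain ⟨s, rfl⟩ := hNmem
      exact key_mem V v i j k hv hi l s
    | zero => rw [Matrix.mul_zero]; exact Submodule.zero_mem _
    | add N₁ N₂ _ _ h₁ h₂ => rw [Matrix.mul_add]; exact Submodule.add_mem _ h₁ h₂
    | smul a N _ h => rw [Matrix.mul_smul]; exact Submodule.smul_mem _ _ h
  | zero => rw [Matrix.zero_mul]; exact Submodule.zero_mem _
  | add M₁ M₂ _ _ h₁ h₂ => rw [Matrix.add_mul]; exact Submodule.add_mem _ h₁ h₂
  | smul a M _ h => rw [Matrix.smul_mul]; exact Submodule.smul_mem _ _ h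
end
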